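/- arXiv:1901.05404 — 9 statements merged into one kernel-verified Lean document; each statement's English description precedes it below -/
import Mathlib

section
/- The following equality holds in [0,∞]: Σ_{n=0}^∞ ( ∫_{(n,n+2)} μ(x) dx · ∫_{(n,n+2)} μ(x)⁻¹ dx − 4 ) = (1/2) Σ_{n=0}^∞ Σ_{(σ,ξ) ∈ M × M, σ ≠ ξ} |I_σ^n| |I_ξ^n| (σ − ξ)²/(σ ξ), where each summand on the left-hand side is nonnegative. -/
open MeasureTheory
open scoped ENNReal Classical

/-!
On each window `(n, n + 2)` the weight `μ` takes countably many positive values, so both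
integrals are sums over the level sets `I_σ`. Expanding the product and symmetrising in `(σ, ξ)`
with `σ / ξ + ξ / σ = 2 + (σ - ξ)² / (σ ξ)` gives
`∫ μ · ∫ μ⁻¹ = |I|² + ½ Σ_{σ ≠ ξ} |I_σ| |I_ξ| (σ - ξ)² / (σ ξ)`, and `|I|² = 4`.
The hypothesis `L = ∞` is what makes the intervals `[t k, t (k + 1))` cover the whole window.
-/

open Filter

section LevelSets

variable {α β : Type*} [MeasurableSpace α] (ν : Measure α) {I : Set α} {f : α → β} {S : Set β}

theorem setLIntegral_comp_eq_tsum_measure_levelSet (hS : S.Countable) (hfS : Set.MapsTo f I S)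
    (hmeas : ∀ σ ∈ S, MeasurableSet {x ∈ I | f x = σ}) (g : β → ℝ≥0∞) :
    ∫⁻ x in I, g (f x) ∂ν = ∑' σ : S, ν {x ∈ I | f x = σ} * g σ := by
  have := hS.to_subtype
  have hI : I = ⋃ σ : S, {x ∈ I | f x = σ} := by
    ext x
    simpa using fun hx => hfS hx
  have hdisj : Pairwise (Function.onFun Disjoint fun σ : S => {x ∈ I | f x = σ}) :=
    fun σ ξ hσξ => Set.disjoint_left.2 fun x hσ hξ => hσξ (Subtype.ext (hσ.2.symm.trans hξ.2))
  conv_lhs => rw [hI, lintegral_iUnion (fun σ : S => hmeas σ σ.2) hdisj]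
  refine tsum_congr fun σ => ?_
  rw [setLIntegral_congr_fun (hmeas σ σ.2) fun x hx => by rw [hx.2], setLIntegral_const, mul_comm]

theorem measure_eq_tsum_measure_levelSet (hS : S.Countable) (hfS : Set.MapsTo f I S)
    (hmeas : ∀ σ ∈ S, MeasurableSet {x ∈ I | f x = σ}) :
    ν I = ∑' σ : S, ν {x ∈ I | f x = σ} := by
  simpa using setLIntegral_comp_eq_tsum_measure_levelSet ν hS hfS hmeas 1

end LevelSets

theorem ENNReal.ofReal_div_add_ofReal_div {x y : ℝ} (hx : 0 < x) (hy : 0 < y) :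
    ENNReal.ofReal (x / y) + ENNReal.ofReal (y / x) =
      2 + ENNReal.ofReal ((x - y) ^ 2 / (x * y)) := by
  have hxy : x / y + y / x = 2 + (x - y) ^ 2 / (x * y) := by
    field_simp
    ring
  rw [← ENNReal.ofReal_add (by positivity) (by positivity), hxy,
    ENNReal.ofReal_add zero_le_two (by positivity), ENNReal.ofReal_ofNat]

theorem ENNReal.tsum_mul_ofReal_mul_tsum_mul_ofReal_inv {ι : Type*} (a : ι → ℝ≥0∞) {c : ι → ℝ}
    (hc : ∀ i, 0 < c i) :
    (∑' i, a i * ENNReal.ofReal (c i)) * ∑' i, a i * ENNReal.ofReal (c i)⁻¹ =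
      (∑' i, a i) ^ 2 +
        1 / 2 * ∑' i, ∑' j, a i * a j * ENNReal.ofReal ((c i - c j) ^ 2 / (c i * c j)) := by
  set X := ∑' i, ∑' j, a i * a j * ENNReal.ofReal (c i / c j)
  set D := ∑' i, ∑' j, a i * a j * ENNReal.ofReal ((c i - c j) ^ 2 / (c i * c j))
  have hprod : (∑' i, a i * ENNReal.ofReal (c i)) * ∑' i, a i * ENNReal.ofReal (c i)⁻¹ = X := by
    simp_rw [← ENNReal.tsum_mul_right, ← ENNReal.tsum_mul_left]
    refine tsum_congr fun i => tsum_congr fun j => ?_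
    rw [div_eq_mul_inv, ENNReal.ofReal_mul (hc i).le]
    ring
  have hsq : (∑' i, a i) ^ 2 = ∑' i, ∑' j, a i * a j := by
    simp_rw [sq, ← ENNReal.tsum_mul_right, ← ENNReal.tsum_mul_left]
  have hsymm : X + X = 2 * (∑' i, a i) ^ 2 + D := by
    simp only [X]
    conv_lhs => arg 2; rw [ENNReal.tsum_comm]
    simp_rw [hsq, D, ← ENNReal.tsum_mul_left, ← ENNReal.tsum_add]
    refine tsum_congr fun i => tsum_congr fun j => ?_
    rw [mul_comm (a j), ← mul_add, ENNReal.ofReal_div_add_ofReal_div (hc i) (hc j)]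
    ring
  have htwo : (2 : ℝ≥0∞) * (1 / 2) = 1 :=
    ENNReal.mul_div_cancel two_ne_zero ENNReal.ofNat_ne_top
  rw [hprod, ← ENNReal.mul_right_inj two_ne_zero ENNReal.ofNat_ne_top, two_mul, hsymm,
    mul_add, ← mul_assoc, htwo, one_mul]

theorem setLIntegral_ofReal_mul_setLIntegral_ofReal_inv {α : Type*} [MeasurableSpace α]
    (ν : Measure α) {I : Set α} {f : α → ℝ} {S : Set ℝ} (hS : S.Countable)
    (hSpos : ∀ σ ∈ S, 0 < σ) (hfS : Set.MapsTo f I S)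
    (hmeas : ∀ σ ∈ S, MeasurableSet {x ∈ I | f x = σ}) :
    (∫⁻ x in I, ENNReal.ofReal (f x) ∂ν) * ∫⁻ x in I, ENNReal.ofReal (f x)⁻¹ ∂ν =
      ν I ^ 2 + 1 / 2 * ∑' σ : S, ∑' ξ : S,
        if (σ : ℝ) ≠ ξ then
          ν {x ∈ I | f x = σ} * ν {x ∈ I | f x = ξ} *
            ENNReal.ofReal (((σ : ℝ) - ξ) ^ 2 / ((σ : ℝ) * ξ))
        else 0 := by
  rw [setLIntegral_comp_eq_tsum_measure_levelSet ν hS hfS hmeas,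
    setLIntegral_comp_eq_tsum_measure_levelSet ν hS hfS hmeas (fun v => ENNReal.ofReal v⁻¹),
    measure_eq_tsum_measure_levelSet ν hS hfS hmeas,
    ENNReal.tsum_mul_ofReal_mul_tsum_mul_ofReal_inv _ fun σ : S => hSpos σ σ.2]
  congr 3
  refine funext fun σ => tsum_congr fun ξ => ?_
  split_ifs with h
  · rfl
  · simp [not_not.1 h]

theorem measurableSet_levelSet_of_eqOn_pieces {α ι β : Type*} [MeasurableSpace α] [Countable ι]
    {I : Set α} {P : ι → Set α} {f : α → β} {c : ι → β} (hI : MeasurableSet I)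
    (hP : ∀ k, MeasurableSet (P k)) (hcover : I ⊆ ⋃ k, P k)
    (hf : ∀ k, Set.EqOn f (fun _ => c k) (P k))
    (v : β) : MeasurableSet {x ∈ I | f x = v} := by
  have : {x ∈ I | f x = v} = I ∩ ⋃ k, ⋃ (_ : c k = v), P k := by
    ext x
    refine ⟨fun ⟨hx, hfx⟩ => ?_, fun ⟨hx, hxP⟩ => ⟨hx, ?_⟩⟩
    · obtain ⟨k, hk⟩ := Set.mem_iUnion.1 (hcover hx)
      exact ⟨hx, Set.mem_iUnion₂.2 ⟨k, (hf k hk).symm.trans hfx, hk⟩⟩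
    · obtain ⟨k, rfl, hk⟩ := Set.mem_iUnion₂.1 hxP
      exact hf k hk
  rw [this]
  exact hI.inter (.iUnion fun k => .iUnion fun _ => hP k)

theorem exists_mem_Ico_succ_of_le_of_lt {α : Type*} [LinearOrder α] {t : ℕ → α} {x : α}
    (h0 : t 0 ≤ x) (hx : ∃ m, x < t m) : ∃ k, x ∈ Set.Ico (t k) (t (k + 1)) := by
  obtain ⟨k, hk⟩ : ∃ k, Nat.find hx = k + 1 :=
    Nat.exists_eq_succ_of_ne_zero fun h => (h ▸ Nat.find_spec hx).not_ge h0
  exact ⟨k, not_lt.1 (Nat.find_min hx (hk ▸ k.lt_succ_self)), hk ▸ Nat.find_spec hx⟩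

theorem tendsto_sum_range_of_tsum_ofReal_eq_top {ℓ : ℕ → ℝ} (hℓ : ∀ n, 0 ≤ ℓ n)
    (hL : ∑' n, ENNReal.ofReal (ℓ n) = ∞) :
    Tendsto (fun n => ∑ i ∈ Finset.range n, ℓ i) atTop atTop :=
  (not_summable_iff_tendsto_nat_atTop_of_nonneg hℓ).1 fun hsum =>
    ENNReal.ofReal_ne_top (ENNReal.ofReal_tsum_of_nonneg hℓ hsum ▸ hL)

theorem bessonov_denisov_sum_identity_general (s : ℕ → ℕ) (hs : ∀ n, 1 ≤ s n)
    (ℓ : ℕ → ℝ) (hℓ : ∀ n, 0 < ℓ n)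
    (t : ℕ → ℝ) (ht0 : t 0 = 0) (htrec : ∀ n, t (n + 1) = t n + ℓ n)
    (hL : (∑' n : ℕ, ENNReal.ofReal (ℓ n)) = ∞)
    (μ : ℝ → ℝ)
    (hμ : ∀ n : ℕ, ∀ x ∈ Set.Ico (t n) (t (n + 1)), μ x = (s n : ℝ) * (s (n + 1) : ℝ)) :
    (∀ n : ℕ, 4 ≤
      (∫⁻ x in Set.Ioo (n : ℝ) (n + 2), ENNReal.ofReal (μ x)) *
        ∫⁻ x in Set.Ioo (n : ℝ) (n + 2), ENNReal.ofReal ((μ x)⁻¹)) ∧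
    (∑' n : ℕ,
      ((∫⁻ x in Set.Ioo (n : ℝ) (n + 2), ENNReal.ofReal (μ x)) *
          (∫⁻ x in Set.Ioo (n : ℝ) (n + 2), ENNReal.ofReal ((μ x)⁻¹)) - 4)) =
    (1 / 2 : ℝ≥0∞) *
      ∑' n : ℕ,
        ∑' σ : (Set.range fun k : ℕ => (s k : ℝ) * (s (k + 1) : ℝ)),
          ∑' ξ : (Set.range fun k : ℕ => (s k : ℝ) * (s (k + 1) : ℝ)),
            if (σ : ℝ) ≠ (ξ : ℝ) then
              volume {x ∈ Set.Ioo (n : ℝ) (n + 2) | μ x = (σ : ℝ)} *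
                volume {x ∈ Set.Ioo (n : ℝ) (n + 2) | μ x = (ξ : ℝ)} *
                ENNReal.ofReal (((σ : ℝ) - (ξ : ℝ)) ^ 2 / ((σ : ℝ) * (ξ : ℝ)))
            else 0 := by
  set c : ℕ → ℝ := fun k => (s k : ℝ) * (s (k + 1) : ℝ)
  have hcpos : ∀ σ ∈ Set.range c, 0 < σ := by
    rintro _ ⟨k, rfl⟩
    have := hs k
    have := hs (k + 1)
    positivity
  have ht : t = fun n => ∑ i ∈ Finset.range n, ℓ i := funext fun n => by
    simp_rw [Finset.eq_sum_range_sub t n, ht0, htrec, add_sub_cancel_left, zero_add]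
  have hcover (n : ℕ) : Set.Ioo (n : ℝ) (n + 2) ⊆ ⋃ k, Set.Ico (t k) (t (k + 1)) := fun x hx =>
    Set.mem_iUnion.2 <| exists_mem_Ico_succ_of_le_of_lt (ht0 ▸ n.cast_nonneg.trans hx.1.le) <|
      (ht ▸ tendsto_sum_range_of_tsum_ofReal_eq_top (fun k => (hℓ k).le) hL).eventually_gt_atTop x
      |>.exists
  have hmaps (n : ℕ) : Set.MapsTo μ (Set.Ioo (n : ℝ) (n + 2)) (Set.range c) := fun x hx => by
    obtain ⟨k, hk⟩ := Set.mem_iUnion.1 (hcover n hx)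
    exact ⟨k, (hμ k x hk).symm⟩
  have key (n : ℕ) := setLIntegral_ofReal_mul_setLIntegral_ofReal_inv volume (Set.countable_range c)
    hcpos (hmaps n) fun σ _ => measurableSet_levelSet_of_eqOn_pieces measurableSet_Ioo
      (fun _ => measurableSet_Ico) (hcover n) hμ σ
  have hvol (n : ℕ) : volume (Set.Ioo (n : ℝ) (n + 2)) ^ 2 = 4 := by
    rw [Real.volume_Ioo, add_sub_cancel_left]
    norm_num
  simp only [hvol] at key
  refine ⟨fun n => key n ▸ le_self_add, ?_⟩
  simp_rw [key, ENNReal.add_sub_cancel_left ENNReal.ofNat_ne_top]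
  exact ENNReal.tsum_mul_left

/-- Lemma 9.4.  With `M = {sₖsₖ₊₁ : k ∈ ℕ}` and
`|I_σⁿ| = |{x ∈ (n,n+2) : μ(x) = σ}|`, one has, in `[0,∞]`,
`Σₙ (∫ₙ^{n+2} μ · ∫ₙ^{n+2} 1/μ − 4)
  = ½ Σₙ Σ_{σ≠ξ ∈ M} |I_σⁿ||I_ξⁿ| (σ−ξ)²/(σξ)`,
each summand on the left being `≥ 4`-bounded below, i.e. nonnegative. -/
theorem bessonov_denisov_sum_identity (s : ℕ → ℕ) (hs : ∀ n, 1 ≤ s n)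
    (ℓ : ℕ → ℝ) (hℓ : ∀ n, 0 < ℓ n)
    (t : ℕ → ℝ) (ht0 : t 0 = 0) (htrec : ∀ n, t (n + 1) = t n + ℓ n)
    (hL : (∑' n : ℕ, ENNReal.ofReal (ℓ n)) = ∞)
    (μ : ℝ → ℝ)
    (hμ : ∀ n : ℕ, ∀ x ∈ Set.Ico (t n) (t (n + 1)), μ x = (s n : ℝ) * (s (n + 1) : ℝ))
    (hμneg : ∀ x : ℝ, x < 0 → μ x = 1) :
    (∀ n : ℕ, 4 ≤
      (∫⁻ x in Set.Ioo (n : ℝ) (n + 2), ENNReal.ofReal (μ x)) *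
        ∫⁻ x in Set.Ioo (n : ℝ) (n + 2), ENNReal.ofReal ((μ x)⁻¹)) ∧
    (∑' n : ℕ,
      ((∫⁻ x in Set.Ioo (n : ℝ) (n + 2), ENNReal.ofReal (μ x)) *
          (∫⁻ x in Set.Ioo (n : ℝ) (n + 2), ENNReal.ofReal ((μ x)⁻¹)) - 4)) =
    (1 / 2 : ℝ≥0∞) *
      ∑' n : ℕ,
        ∑' σ : (Set.range fun k : ℕ => (s k : ℝ) * (s (k + 1) : ℝ)),
          ∑' ξ : (Set.range fun k : ℕ => (s k : ℝ) * (s (k + 1) : ℝ)),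
            if (σ : ℝ) ≠ (ξ : ℝ) then
              volume {x ∈ Set.Ioo (n : ℝ) (n + 2) | μ x = (σ : ℝ)} *
                volume {x ∈ Set.Ioo (n : ℝ) (n + 2) | μ x = (ξ : ℝ)} *
                ENNReal.ofReal (((σ : ℝ) - (ξ : ℝ)) ^ 2 / ((σ : ℝ) * (ξ : ℝ)))
            else 0 :=
  bessonov_denisov_sum_identity_general s hs ℓ hℓ t ht0 htrec hL μ hμ
end

section
/- Assume additionally ℓ_n ≥ 2 for all n (so in particular L = ∞). Then Σ_{n=0}^∞ ( ∫_{(n,n+2)} μ(x) dx · ∫_{(n,n+2)} μ(x)⁻¹ dx − 4 ) ≤ 4 Σ_{n=0}^∞ (s_{n+2} − s_n)²/(s_n s_{n+2}), an inequality in [0,∞]. In particular, if Σ_{n=0}^∞ (s_{n+2}/s_n − 1)² < ∞, then the left-hand side is finite. -/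
/-!
Because every edge has length at least `2`, a window `(n, n + 2)` meets at most two consecutive
steps of `μ`, with values `a = sₖ sₖ₊₁` and `b = sₖ₊₁ sₖ₊₂`. If the break point splits the window
into pieces of lengths `α + β = 2`, then
`(aα + bβ)(α/a + β/b) = (α + β)² + αβ (a - b)²/(ab) ≤ 4 + (sₖ₊₂ - sₖ)²/(sₖ sₖ₊₂)`,
and each break point `tₖ₊₁` lies in at most two windows. For the finiteness, writing
`r = sₖ₊₂/sₖ`, the summand `(r - 1)²/r` is at most `2 (r - 1)²` as soon as `r > 1/2`.
-/

open MeasureTheory Set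
open scoped ENNReal

theorem setLIntegral_Ioo_ofReal_eq_of_step {f : ℝ → ℝ} {p c q a b : ℝ} (hpc : p < c)
    (hcq : c ≤ q) (ha : 0 ≤ a) (hb : 0 ≤ b) (hfa : ∀ x ∈ Ioo p c, f x = a)
    (hfb : ∀ x ∈ Ico c q, f x = b) :
    ∫⁻ x in Ioo p q, ENNReal.ofReal (f x) = ENNReal.ofReal (a * (c - p) + b * (q - c)) := by
  have hdisj : Disjoint (Ioo p c) (Ico c q) :=
    disjoint_left.mpr fun x hx hx' => hx.2.not_ge hx'.1
  rw [← Ioo_union_Ico_eq_Ioo hpc hcq, lintegral_union measurableSet_Ico hdisj,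
    setLIntegral_congr_fun measurableSet_Ioo fun x hx => by rw [hfa x hx],
    setLIntegral_congr_fun measurableSet_Ico fun x hx => by rw [hfb x hx],
    setLIntegral_const, setLIntegral_const, Real.volume_Ioo, Real.volume_Ico,
    ← ENNReal.ofReal_mul ha, ← ENNReal.ofReal_mul hb,
    ENNReal.ofReal_add (by positivity) (by positivity)]

theorem step_mul_step_inv_eq {a b α β : ℝ} (ha : a ≠ 0) (hb : b ≠ 0) :
    (a * α + b * β) * (a⁻¹ * α + b⁻¹ * β) = (α + β) ^ 2 + α * β * ((a - b) ^ 2 / (a * b)) := by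
  field_simp
  ring

theorem lintegral_mul_lintegral_inv_sub_sq_eq_of_step {f : ℝ → ℝ} {p c q a b : ℝ}
    (hpc : p < c) (hcq : c ≤ q) (ha : 0 < a) (hb : 0 < b) (hfa : ∀ x ∈ Ioo p c, f x = a)
    (hfb : ∀ x ∈ Ico c q, f x = b) :
    (∫⁻ x in Ioo p q, ENNReal.ofReal (f x)) * (∫⁻ x in Ioo p q, ENNReal.ofReal (f x)⁻¹) -
        ENNReal.ofReal ((q - p) ^ 2) =
      ENNReal.ofReal ((c - p) * (q - c) * ((a - b) ^ 2 / (a * b))) := by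
  rw [setLIntegral_Ioo_ofReal_eq_of_step hpc hcq ha.le hb.le hfa hfb,
    setLIntegral_Ioo_ofReal_eq_of_step (a := a⁻¹) (b := b⁻¹) hpc hcq (by positivity)
      (by positivity) (fun x hx => by rw [hfa x hx]) (fun x hx => by rw [hfb x hx]),
    ← ENNReal.ofReal_mul (by positivity), step_mul_step_inv_eq ha.ne' hb.ne',
    show c - p + (q - c) = q - p by ring, ENNReal.ofReal_add (sq_nonneg _) (by positivity),
    ENNReal.add_sub_cancel_left ENNReal.ofReal_ne_top]

theorem tsum_ite_mem_Ioo_natCast_le (x : ℝ) (m : ℕ) (c : ℝ≥0∞) :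
    ∑' n : ℕ, (if x ∈ Ioo (n : ℝ) (n + m) then c else 0) ≤ m * c := by
  have hsupp : ∀ n ∉ Finset.Ico (⌈x⌉₊ - m) ⌈x⌉₊,
      (if x ∈ Ioo (n : ℝ) (n + m) then c else 0) = 0 := by
    intro n hn
    refine if_neg fun hx => hn (Finset.mem_Ico.mpr ⟨?_, Nat.lt_ceil.mpr hx.1⟩)
    have : ⌈x⌉₊ ≤ n + m := Nat.ceil_le.mpr (by exact_mod_cast hx.2.le)
    omega
  calc ∑' n : ℕ, (if x ∈ Ioo (n : ℝ) (n + m) then c else 0)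
      = ∑ n ∈ Finset.Ico (⌈x⌉₊ - m) ⌈x⌉₊, (if x ∈ Ioo (n : ℝ) (n + m) then c else 0) :=
        tsum_eq_sum hsupp
    _ ≤ ∑ _n ∈ Finset.Ico (⌈x⌉₊ - m) ⌈x⌉₊, c :=
        Finset.sum_le_sum fun n _ => by split_ifs <;> simp
    _ ≤ m * c := by
      rw [Finset.sum_const, Nat.card_Ico, nsmul_eq_mul]
      gcongr
      exact_mod_cast (by omega : ⌈x⌉₊ - (⌈x⌉₊ - m) ≤ m)

theorem sq_mul_sub_mul_div_eq {x y z : ℝ} (hy : y ≠ 0) :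
    (x * y - y * z) ^ 2 / (x * y * (y * z)) = (z - x) ^ 2 / (x * z) := by
  rw [show x * y - y * z = y * (x - z) by ring, show x * y * (y * z) = y ^ 2 * (x * z) by ring,
    mul_pow, mul_div_mul_left _ _ (pow_ne_zero 2 hy), ← neg_sub, neg_sq]

section Antitree

variable {s : ℕ → ℕ} {ℓ t : ℕ → ℝ} {μ : ℝ → ℝ}

theorem add_two_mul_le_of_step (hℓ2 : ∀ n, 2 ≤ ℓ n) (htrec : ∀ n, t (n + 1) = t n + ℓ n)
    (n : ℕ) : t 0 + 2 * n ≤ t n := by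
  induction n with
  | zero => simp
  | succ n ih => rw [htrec]; push_cast; linarith [hℓ2 n]

theorem exists_mem_Ico_of_step (hℓ2 : ∀ n, 2 ≤ ℓ n) (ht0 : t 0 = 0)
    (htrec : ∀ n, t (n + 1) = t n + ℓ n) {x : ℝ} (hx : 0 ≤ x) :
    ∃ k, x ∈ Ico (t k) (t (k + 1)) := by
  obtain ⟨N, hN⟩ := exists_nat_gt x
  have hxN : x ∈ Ico (t 0) (t N) := ⟨ht0 ▸ hx, by linarith [add_two_mul_le_of_step hℓ2 htrec N]⟩
  obtain ⟨k, -, hk⟩ := mem_iUnion₂.mp (Ico_subset_biUnion_Ico N t hxN)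
  exact ⟨k, hk⟩

theorem lintegral_mul_lintegral_inv_sub_four_le_tsum (hs : ∀ n, 1 ≤ s n)
    (hℓ2 : ∀ n, 2 ≤ ℓ n) (ht0 : t 0 = 0) (htrec : ∀ n, t (n + 1) = t n + ℓ n)
    (hμ : ∀ n : ℕ, ∀ x ∈ Ico (t n) (t (n + 1)), μ x = (s n : ℝ) * (s (n + 1) : ℝ)) (n : ℕ) :
    (∫⁻ x in Ioo (n : ℝ) (n + 2), ENNReal.ofReal (μ x)) *
        (∫⁻ x in Ioo (n : ℝ) (n + 2), ENNReal.ofReal (μ x)⁻¹) - 4 ≤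
      ∑' k, if t (k + 1) ∈ Ioo (n : ℝ) (n + 2) then
        ENNReal.ofReal (((s (k + 2) : ℝ) - s k) ^ 2 / (s k * s (k + 2))) else 0 := by
  obtain ⟨k, hk⟩ := exists_mem_Ico_of_step hℓ2 ht0 htrec (Nat.cast_nonneg n)
  have hs_pos : ∀ m, (0 : ℝ) < s m := fun m => by exact_mod_cast hs m
  have hpos : ∀ m, (0 : ℝ) < s m * s (m + 1) := fun m => mul_pos (hs_pos m) (hs_pos (m + 1))
  have hfour : ENNReal.ofReal (((n : ℝ) + 2 - n) ^ 2) = 4 := by norm_num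
  rw [← hfour]
  by_cases hbreak : t (k + 1) < n + 2
  · have hnext : (n : ℝ) + 2 ≤ t (k + 2) := by rw [htrec]; linarith [hℓ2 (k + 1), hk.2]
    rw [lintegral_mul_lintegral_inv_sub_sq_eq_of_step hk.2 hbreak.le (hpos k) (hpos (k + 1))
      (fun x hx => hμ k x ⟨hk.1.trans hx.1.le, hx.2⟩)
      (fun x hx => hμ (k + 1) x ⟨hx.1, hx.2.trans_le hnext⟩),
      sq_mul_sub_mul_div_eq (hs_pos (k + 1)).ne']
    refine le_trans ?_ (ENNReal.le_tsum k)
    rw [if_pos ⟨hk.2, hbreak⟩]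
    have hαβ : (t (k + 1) - n) * (n + 2 - t (k + 1)) ≤ 1 := by
      nlinarith [sq_nonneg (t (k + 1) - n - 1)]
    exact ENNReal.ofReal_le_ofReal (mul_le_of_le_one_left (by positivity) hαβ)
  · -- only the step `k` meets the window: split it trivially at `c = n + 2`
    rw [lintegral_mul_lintegral_inv_sub_sq_eq_of_step (c := n + 2) (b := s k * s (k + 1))
      (by linarith) le_rfl (hpos k) (hpos k)
      (fun x hx => hμ k x ⟨hk.1.trans hx.1.le, by linarith [hx.2]⟩)
      (fun x hx => absurd hx.1 hx.2.not_ge)]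
    simp

end Antitree

theorem sq_sub_div_mul_le_two_mul_sq_div_sub_one {u v : ℝ} (hu : 0 < u) (hv : 0 < v)
    (h : (u / v - 1) ^ 2 < 1 / 4) : (u - v) ^ 2 / (v * u) ≤ 2 * (u / v - 1) ^ 2 := by
  have hr : 1 / 2 < u / v := by nlinarith
  rw [show (u - v) ^ 2 / (v * u) = (u / v - 1) ^ 2 / (u / v) by field_simp,
    div_le_iff₀ (by positivity)]
  nlinarith [sq_nonneg (u / v - 1)]

theorem summable_sq_sub_div_mul_of_summable_sq_div_sub_one {u v : ℕ → ℝ} (hu : ∀ n, 0 < u n)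
    (hv : ∀ n, 0 < v n) (h : Summable fun n => (u n / v n - 1) ^ 2) :
    Summable fun n => (u n - v n) ^ 2 / (v n * u n) := by
  refine Summable.of_norm_bounded_eventually_nat (h.mul_left 2) ?_
  filter_upwards [h.tendsto_atTop_zero.eventually_lt_const (by norm_num : (0 : ℝ) < 1 / 4)]
    with n hn
  have := hu n; have := hv n
  rw [Real.norm_of_nonneg (by positivity)]
  exact sq_sub_div_mul_le_two_mul_sq_div_sub_one (hu n) (hv n) hn

theorem bessonov_denisov_sum_estimate_general (s : ℕ → ℕ) (hs : ∀ n, 1 ≤ s n)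
    (ℓ : ℕ → ℝ) (hℓ2 : ∀ n, 2 ≤ ℓ n)
    (t : ℕ → ℝ) (ht0 : t 0 = 0) (htrec : ∀ n, t (n + 1) = t n + ℓ n)
    (μ : ℝ → ℝ)
    (hμ : ∀ n : ℕ, ∀ x ∈ Set.Ico (t n) (t (n + 1)), μ x = (s n : ℝ) * (s (n + 1) : ℝ)) :
    (∑' n : ℕ,
      ((∫⁻ x in Set.Ioo (n : ℝ) (n + 2), ENNReal.ofReal (μ x)) *
          (∫⁻ x in Set.Ioo (n : ℝ) (n + 2), ENNReal.ofReal ((μ x)⁻¹)) - 4)) ≤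
      4 * ∑' n : ℕ,
        ENNReal.ofReal (((s (n + 2) : ℝ) - (s n : ℝ)) ^ 2 / ((s n : ℝ) * (s (n + 2) : ℝ))) ∧
    (Summable (fun n : ℕ => ((s (n + 2) : ℝ) / (s n : ℝ) - 1) ^ 2) →
      (∑' n : ℕ,
        ((∫⁻ x in Set.Ioo (n : ℝ) (n + 2), ENNReal.ofReal (μ x)) *
            (∫⁻ x in Set.Ioo (n : ℝ) (n + 2), ENNReal.ofReal ((μ x)⁻¹)) - 4)) < ∞) := by
  set G : ℕ → ℝ := fun k => ((s (k + 2) : ℝ) - s k) ^ 2 / (s k * s (k + 2))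
  have hs_pos : ∀ n, (0 : ℝ) < s n := fun n => by exact_mod_cast hs n
  have hbound := calc
    ∑' n : ℕ, ((∫⁻ x in Ioo (n : ℝ) (n + 2), ENNReal.ofReal (μ x)) *
        (∫⁻ x in Ioo (n : ℝ) (n + 2), ENNReal.ofReal (μ x)⁻¹) - 4)
      ≤ ∑' (n : ℕ) (k : ℕ), if t (k + 1) ∈ Ioo (n : ℝ) (n + 2) then ENNReal.ofReal (G k) else 0 :=
        ENNReal.tsum_le_tsum
          (lintegral_mul_lintegral_inv_sub_four_le_tsum hs hℓ2 ht0 htrec hμ)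
    _ = ∑' (k : ℕ) (n : ℕ), if t (k + 1) ∈ Ioo (n : ℝ) (n + 2) then ENNReal.ofReal (G k) else 0 :=
        ENNReal.tsum_comm
    _ ≤ ∑' k, 2 * ENNReal.ofReal (G k) := ENNReal.tsum_le_tsum fun k => by
        simpa using tsum_ite_mem_Ioo_natCast_le (t (k + 1)) 2 (ENNReal.ofReal (G k))
    _ ≤ 4 * ∑' k, ENNReal.ofReal (G k) := by
        rw [ENNReal.tsum_mul_left]; gcongr; norm_num
  refine ⟨hbound, fun h => hbound.trans_lt (ENNReal.mul_lt_top (by simp) ?_)⟩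
  rw [← ENNReal.ofReal_tsum_of_nonneg (fun k => by positivity)
    (summable_sq_sub_div_mul_of_summable_sq_div_sub_one (fun n => hs_pos (n + 2)) hs_pos h)]
  exact ENNReal.ofReal_lt_top

/-- key estimate in the proof of Theorem 9.5.  If all edge
lengths satisfy `ℓₙ ≥ 2` then, in `[0,∞]`,
`Σₙ ( ∫ₙ^{n+2} μ · ∫ₙ^{n+2} 1/μ − 4 ) ≤ 4 Σₙ (sₙ₊₂−sₙ)²/(sₙsₙ₊₂)`;
in particular if `Σ (sₙ₊₂/sₙ − 1)² < ∞` then the left-hand side is finite. -/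
theorem bessonov_denisov_sum_estimate (s : ℕ → ℕ) (hs : ∀ n, 1 ≤ s n)
    (ℓ : ℕ → ℝ) (hℓ : ∀ n, 0 < ℓ n) (hℓ2 : ∀ n, 2 ≤ ℓ n)
    (t : ℕ → ℝ) (ht0 : t 0 = 0) (htrec : ∀ n, t (n + 1) = t n + ℓ n)
    (L : ℝ≥0∞) (hL : L = ∑' n : ℕ, ENNReal.ofReal (ℓ n))
    (μ : ℝ → ℝ)
    (hμ : ∀ n : ℕ, ∀ x ∈ Set.Ico (t n) (t (n + 1)), μ x = (s n : ℝ) * (s (n + 1) : ℝ))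
    (hμout : ∀ x : ℝ, (x < 0 ∨ L ≤ ENNReal.ofReal x) → μ x = 1) :
    (∑' n : ℕ,
      ((∫⁻ x in Set.Ioo (n : ℝ) (n + 2), ENNReal.ofReal (μ x)) *
          (∫⁻ x in Set.Ioo (n : ℝ) (n + 2), ENNReal.ofReal ((μ x)⁻¹)) - 4)) ≤
      4 * ∑' n : ℕ,
        ENNReal.ofReal (((s (n + 2) : ℝ) - (s n : ℝ)) ^ 2 / ((s n : ℝ) * (s (n + 2) : ℝ))) ∧
    (Summable (fun n : ℕ => ((s (n + 2) : ℝ) / (s n : ℝ) - 1) ^ 2) →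
      (∑' n : ℕ,
        ((∫⁻ x in Set.Ioo (n : ℝ) (n + 2), ENNReal.ofReal (μ x)) *
            (∫⁻ x in Set.Ioo (n : ℝ) (n + 2), ENNReal.ofReal ((μ x)⁻¹)) - 4)) < ∞) :=
  bessonov_denisov_sum_estimate_general s hs ℓ hℓ2 t ht0 htrec μ hμ
end

section
/- Assume the antitree is equilateral: ℓ_n = ℓ > 0 for all n, so t_n = nℓ and L = ∞. Then for every n ∈ ℕ: ∫_{(nℓ,(n+2)ℓ)} μ(x) dx · ∫_{(nℓ,(n+2)ℓ)} μ(x)⁻¹ dx − 4ℓ² = ℓ² (s_{n+2} − s_n)²/(s_n s_{n+2}). Consequently, if Σ_{n=0}^∞ (s_{n+2}/s_n − 1)² < ∞, then Σ_{n=0}^∞ ( ∫_{(nℓ,(n+2)ℓ)} μ(x) dx · ∫_{(nℓ,(n+2)ℓ)} μ(x)⁻¹ dx − 4ℓ² ) < ∞. -/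
/-!
On the window `(nℓ, (n+2)ℓ)` the weight takes the value `a = sₙsₙ₊₁` on the first edge and
`b = sₙ₊₁sₙ₊₂` on the second, so the product of the two integrals is
`ℓ²(a + b)(a⁻¹ + b⁻¹) = 4ℓ² + ℓ²(a - b)²/(ab)`, and `(a - b)²/(ab) = (r - 1)²/r` with
`r = sₙ₊₂/sₙ`. If `Σ (r - 1)²` converges then `r → 1`, so eventually `(r - 1)²/r ≤ 2(r - 1)²`.
-/

open MeasureTheory Set
open scoped ENNReal

theorem Summable.sq_sub_one_div_self {ι : Type*} {r : ι → ℝ} (hr : ∀ i, 0 < r i)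
    (h : Summable fun i => (r i - 1) ^ 2) : Summable fun i => (r i - 1) ^ 2 / r i := by
  refine (h.mul_left 2).of_norm_bounded_eventually ?_
  filter_upwards [h.tendsto_cofinite_zero.eventually (gt_mem_nhds (by norm_num : (0:ℝ) < 1 / 4))]
    with i hi
  have hr2 : 1 / 2 < r i := by nlinarith
  rw [Real.norm_of_nonneg (div_nonneg (sq_nonneg _) (hr i).le), div_le_iff₀ (hr i)]
  nlinarith [mul_nonneg (sq_nonneg (r i - 1)) (sub_nonneg.2 hr2.le)]

theorem setLIntegral_Ioo_of_eqOn_Ico {f : ℝ → ℝ≥0∞} {p q r : ℝ} {c₁ c₂ : ℝ≥0∞}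
    (hpq : p < q) (hqr : q ≤ r) (h₁ : EqOn f (fun _ => c₁) (Ico p q))
    (h₂ : EqOn f (fun _ => c₂) (Ico q r)) :
    ∫⁻ x in Ioo p r, f x = c₁ * ENNReal.ofReal (q - p) + c₂ * ENNReal.ofReal (r - q) := by
  rw [← Ioo_union_Ico_eq_Ioo hpq hqr, lintegral_union measurableSet_Ico
      ((Iio_disjoint_Ici le_rfl).mono Ioo_subset_Iio_self Ico_subset_Ici_self),
    setLIntegral_congr_fun measurableSet_Ioo (h₁.mono Ioo_subset_Ico_self),
    setLIntegral_congr_fun measurableSet_Ico h₂, setLIntegral_const, setLIntegral_const,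
    Real.volume_Ioo, Real.volume_Ico]

section EquilateralAntitree

variable {s : ℕ → ℕ} {l : ℝ} {μ : ℝ → ℝ}
  (hμ : ∀ n : ℕ, ∀ x ∈ Ico ((n : ℝ) * l) (((n : ℝ) + 1) * l), μ x = (s n : ℝ) * (s (n + 1) : ℝ))
include hμ

theorem setLIntegral_comp_window (hl : 0 < l) (F : ℝ → ℝ≥0∞) (n : ℕ) :
    ∫⁻ x in Ioo ((n : ℝ) * l) (((n : ℝ) + 2) * l), F (μ x) =
      (F ((s n : ℝ) * s (n + 1)) + F ((s (n + 1) : ℝ) * s (n + 2))) * ENNReal.ofReal l := by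
  have hstep : ((n : ℝ) + 1) * l - n * l = l := by ring
  have hstep' : ((n : ℝ) + 2) * l - (n + 1) * l = l := by ring
  rw [setLIntegral_Ioo_of_eqOn_Ico (q := ((n : ℝ) + 1) * l) (c₁ := F ((s n : ℝ) * s (n + 1)))
      (c₂ := F ((s (n + 1) : ℝ) * s (n + 2))) (by nlinarith) (by nlinarith)
      (fun x hx => by simp only [hμ n x hx]) (fun x hx => ?_), hstep, hstep', add_mul]
  have hx' : x ∈ Ico (((n + 1 : ℕ) : ℝ) * l) ((((n + 1 : ℕ) : ℝ) + 1) * l) := by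
    push_cast; rwa [add_assoc, one_add_one_eq_two]
  simp only [hμ (n + 1) x hx']

theorem setLIntegral_mul_setLIntegral_inv_window (hs : ∀ n, 1 ≤ s n) (hl : 0 < l) (n : ℕ) :
    ENNReal.ofReal (4 * l ^ 2) ≤
        (∫⁻ x in Ioo ((n : ℝ) * l) ((n + 2) * l), ENNReal.ofReal (μ x)) *
          ∫⁻ x in Ioo ((n : ℝ) * l) ((n + 2) * l), ENNReal.ofReal (μ x)⁻¹ ∧
      (∫⁻ x in Ioo ((n : ℝ) * l) ((n + 2) * l), ENNReal.ofReal (μ x)) *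
          (∫⁻ x in Ioo ((n : ℝ) * l) ((n + 2) * l), ENNReal.ofReal (μ x)⁻¹) -
        ENNReal.ofReal (4 * l ^ 2) =
      ENNReal.ofReal (l ^ 2 * ((s (n + 2) : ℝ) - s n) ^ 2 / (s n * s (n + 2))) := by
  have hpos : ∀ k, (0 : ℝ) < s k := fun k => by exact_mod_cast hs k
  have h₀ := hpos n; have h₁ := hpos (n + 1); have h₂ := hpos (n + 2)
  have hprod : (∫⁻ x in Ioo ((n : ℝ) * l) ((n + 2) * l), ENNReal.ofReal (μ x)) *
      (∫⁻ x in Ioo ((n : ℝ) * l) ((n + 2) * l), ENNReal.ofReal (μ x)⁻¹) =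
      ENNReal.ofReal (l ^ 2 * ((s n * s (n + 1) + s (n + 1) * s (n + 2) : ℝ) *
        ((s n * s (n + 1) : ℝ)⁻¹ + (s (n + 1) * s (n + 2) : ℝ)⁻¹))) := by
    rw [setLIntegral_comp_window hμ hl ENNReal.ofReal,
      setLIntegral_comp_window hμ hl (fun y => ENNReal.ofReal y⁻¹),
      ← ENNReal.ofReal_add (by positivity) (by positivity),
      ← ENNReal.ofReal_add (by positivity) (by positivity),
      ← ENNReal.ofReal_mul (by positivity), ← ENNReal.ofReal_mul (by positivity),
      ← ENNReal.ofReal_mul (by positivity)]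
    congr 1
    ring
  have hdefect : l ^ 2 * ((s n * s (n + 1) + s (n + 1) * s (n + 2) : ℝ) *
        ((s n * s (n + 1) : ℝ)⁻¹ + (s (n + 1) * s (n + 2) : ℝ)⁻¹)) - 4 * l ^ 2 =
      l ^ 2 * ((s (n + 2) : ℝ) - s n) ^ 2 / (s n * s (n + 2)) := by
    field_simp
    ring
  rw [hprod, ← ENNReal.ofReal_sub _ (by positivity), hdefect]
  refine ⟨ENNReal.ofReal_le_ofReal ?_, rfl⟩
  have : 0 ≤ l ^ 2 * ((s (n + 2) : ℝ) - s n) ^ 2 / (s n * s (n + 2)) := by positivity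
  linarith

end EquilateralAntitree

theorem equilateral_antitree_ac_computation_general (s : ℕ → ℕ) (hs : ∀ n, 1 ≤ s n)
    (l : ℝ) (hl : 0 < l)
    (μ : ℝ → ℝ)
    (hμ : ∀ n : ℕ, ∀ x ∈ Set.Ico ((n : ℝ) * l) (((n : ℝ) + 1) * l),
      μ x = (s n : ℝ) * (s (n + 1) : ℝ)) :
    (∀ n : ℕ,
      ENNReal.ofReal (4 * l ^ 2) ≤
        (∫⁻ x in Set.Ioo ((n : ℝ) * l) (((n : ℝ) + 2) * l), ENNReal.ofReal (μ x)) *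
          (∫⁻ x in Set.Ioo ((n : ℝ) * l) (((n : ℝ) + 2) * l), ENNReal.ofReal ((μ x)⁻¹)) ∧
      (∫⁻ x in Set.Ioo ((n : ℝ) * l) (((n : ℝ) + 2) * l), ENNReal.ofReal (μ x)) *
          (∫⁻ x in Set.Ioo ((n : ℝ) * l) (((n : ℝ) + 2) * l), ENNReal.ofReal ((μ x)⁻¹)) -
        ENNReal.ofReal (4 * l ^ 2) =
      ENNReal.ofReal
        (l ^ 2 * ((s (n + 2) : ℝ) - (s n : ℝ)) ^ 2 / ((s n : ℝ) * (s (n + 2) : ℝ)))) ∧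
    (Summable (fun n : ℕ => ((s (n + 2) : ℝ) / (s n : ℝ) - 1) ^ 2) →
      (∑' n : ℕ,
        ((∫⁻ x in Set.Ioo ((n : ℝ) * l) (((n : ℝ) + 2) * l), ENNReal.ofReal (μ x)) *
            (∫⁻ x in Set.Ioo ((n : ℝ) * l) (((n : ℝ) + 2) * l), ENNReal.ofReal ((μ x)⁻¹)) -
          ENNReal.ofReal (4 * l ^ 2))) < ∞) := by
  have hpos : ∀ n, (0 : ℝ) < s n := fun n => by exact_mod_cast hs n
  refine ⟨setLIntegral_mul_setLIntegral_inv_window hμ hs hl, fun hsum => ?_⟩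
  have hdefect : Summable fun n : ℕ => l ^ 2 * ((s (n + 2) : ℝ) - s n) ^ 2 / (s n * s (n + 2)) := by
    refine ((hsum.sq_sub_one_div_self fun n => div_pos (hpos (n + 2)) (hpos n)).mul_left
      (l ^ 2)).congr fun n => ?_
    have := hpos n
    have := hpos (n + 2)
    field_simp
  rw [tsum_congr fun n => (setLIntegral_mul_setLIntegral_inv_window hμ hs hl n).2]
  exact hdefect.tsum_ofReal_lt_top

/-- proof of Corollary 9.2, equilateral antitrees.  If all
edges have the same length `l > 0` (so `tₙ = n·l` and `L = ∞`), then for every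
`n`:
`∫_{nl}^{(n+2)l} μ · ∫_{nl}^{(n+2)l} 1/μ − 4l² = l² (sₙ₊₂−sₙ)²/(sₙsₙ₊₂)`,
and consequently, if `Σ (sₙ₊₂/sₙ − 1)² < ∞`, then
`Σₙ (∫ μ · ∫ 1/μ − 4l²) < ∞`. -/
theorem equilateral_antitree_ac_computation (s : ℕ → ℕ) (hs : ∀ n, 1 ≤ s n)
    (l : ℝ) (hl : 0 < l)
    (μ : ℝ → ℝ)
    (hμ : ∀ n : ℕ, ∀ x ∈ Set.Ico ((n : ℝ) * l) (((n : ℝ) + 1) * l),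
      μ x = (s n : ℝ) * (s (n + 1) : ℝ))
    (hμneg : ∀ x : ℝ, x < 0 → μ x = 1) :
    (∀ n : ℕ,
      ENNReal.ofReal (4 * l ^ 2) ≤
        (∫⁻ x in Set.Ioo ((n : ℝ) * l) (((n : ℝ) + 2) * l), ENNReal.ofReal (μ x)) *
          (∫⁻ x in Set.Ioo ((n : ℝ) * l) (((n : ℝ) + 2) * l), ENNReal.ofReal ((μ x)⁻¹)) ∧
      (∫⁻ x in Set.Ioo ((n : ℝ) * l) (((n : ℝ) + 2) * l), ENNReal.ofReal (μ x)) *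
          (∫⁻ x in Set.Ioo ((n : ℝ) * l) (((n : ℝ) + 2) * l), ENNReal.ofReal ((μ x)⁻¹)) -
        ENNReal.ofReal (4 * l ^ 2) =
      ENNReal.ofReal
        (l ^ 2 * ((s (n + 2) : ℝ) - (s n : ℝ)) ^ 2 / ((s n : ℝ) * (s (n + 2) : ℝ)))) ∧
    (Summable (fun n : ℕ => ((s (n + 2) : ℝ) / (s n : ℝ) - 1) ^ 2) →
      (∑' n : ℕ,
        ((∫⁻ x in Set.Ioo ((n : ℝ) * l) (((n : ℝ) + 2) * l), ENNReal.ofReal (μ x)) *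
            (∫⁻ x in Set.Ioo ((n : ℝ) * l) (((n : ℝ) + 2) * l), ENNReal.ofReal ((μ x)⁻¹)) -
          ENNReal.ofReal (4 * l ^ 2))) < ∞) :=
  equilateral_antitree_ac_computation_general s hs l hl μ hμ
end

section
/- Let m = max(a, b). Then D(λ) > 0 for every λ ∈ (0, (π/(2m))²), and there exists λ ∈ (0, (π/m)²] with D(λ) = 0. In particular, the smallest positive zero λ₁ of D satisfies (π/(2m))² ≤ λ₁ ≤ (π/m)². -/
/-- Corollary A.2.  For
`D(λ) = q cos(√λ b) sin(√λ a) + p cos(√λ a) sin(√λ b)` and `m = max(a,b)`: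
`D > 0` on `(0, (π/2m)²)`, `D` has a zero in `(0, (π/m)²]`, and hence its
smallest positive zero `λ₁ = inf{λ > 0 : D(λ) = 0}` satisfies
`(π/2m)² ≤ λ₁ ≤ (π/m)²`. -/
theorem lowest_eigenvalue_two_sided_bound (p q a b : ℝ)
    (hp : 0 < p) (hq : 0 < q) (ha : 0 < a) (hb : 0 < b) :
    let D : ℝ → ℝ := fun lam =>
      q * Real.cos (Real.sqrt lam * b) * Real.sin (Real.sqrt lam * a) +
        p * Real.cos (Real.sqrt lam * a) * Real.sin (Real.sqrt lam * b)
    let m : ℝ := max a b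
    (∀ lam ∈ Set.Ioo (0 : ℝ) ((Real.pi / (2 * m)) ^ 2), 0 < D lam) ∧
    (∃ lam ∈ Set.Ioc (0 : ℝ) ((Real.pi / m) ^ 2), D lam = 0) ∧
    (Real.pi / (2 * m)) ^ 2 ≤ sInf {lam : ℝ | 0 < lam ∧ D lam = 0} ∧
    sInf {lam : ℝ | 0 < lam ∧ D lam = 0} ≤ (Real.pi / m) ^ 2 := by
  intro D m
  have hm : 0 < m := lt_of_lt_of_le ha (le_max_left a b)
  have ham : a ≤ m := le_max_left a b
  have hbm : b ≤ m := le_max_right a b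
  have hπ := Real.pi_pos
  have hDeq : D = fun lam =>
      q * Real.cos (Real.sqrt lam * b) * Real.sin (Real.sqrt lam * a) +
        p * Real.cos (Real.sqrt lam * a) * Real.sin (Real.sqrt lam * b) := rfl
  set L : ℝ := (Real.pi / (2 * m)) ^ 2 with hLdef
  set U : ℝ := (Real.pi / m) ^ 2 with hUdef
  have hL : 0 < L := by positivity
  have hLU : L < U := by
    have h1 : Real.pi / (2 * m) < Real.pi / m := by
      rw [div_lt_div_iff₀ (by positivity) hm]; nlinarith
    have h2 : 0 < Real.pi / (2 * m) := by positivity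
    rw [hLdef, hUdef]; nlinarith
  -- Part 1 : positivity on (0, L)
  have part1 : ∀ lam ∈ Set.Ioo (0:ℝ) L, 0 < D lam := by
    rintro lam ⟨h0, hlt⟩
    have hs : 0 < Real.sqrt lam := Real.sqrt_pos.mpr h0
    have hsm : Real.sqrt lam < Real.pi / (2 * m) :=
      (Real.sqrt_lt' (by positivity)).mpr hlt
    have key : ∀ c : ℝ, 0 < c → c ≤ m →
        0 < Real.sin (Real.sqrt lam * c) ∧ 0 < Real.cos (Real.sqrt lam * c) := by
      intro c hc hcm
      have h1 : 0 < Real.sqrt lam * c := by positivity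
      have h2 : Real.sqrt lam * c < Real.pi / 2 := by
        calc Real.sqrt lam * c ≤ Real.sqrt lam * m := by nlinarith
          _ < Real.pi / (2 * m) * m := by nlinarith
          _ = Real.pi / 2 := by field_simp
      exact ⟨Real.sin_pos_of_pos_of_lt_pi h1 (h2.trans (by linarith)),
        Real.cos_pos_of_mem_Ioo ⟨by linarith, h2⟩⟩
    obtain ⟨hsa, hca⟩ := key a ha ham
    obtain ⟨hsb, hcb⟩ := key b hb hbm
    have : 0 < q * Real.cos (Real.sqrt lam * b) * Real.sin (Real.sqrt lam * a) +
        p * Real.cos (Real.sqrt lam * a) * Real.sin (Real.sqrt lam * b) :=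
      add_pos (mul_pos (mul_pos hq hcb) hsa) (mul_pos (mul_pos hp hca) hsb)
    rw [hDeq]; exact this
  -- D(U) ≤ 0
  have hsqU : Real.sqrt U = Real.pi / m := by
    rw [hUdef, Real.sqrt_sq (by positivity)]
  have hDU : D U ≤ 0 := by
    rw [hDeq]
    simp only [hsqU]
    rcases max_choice a b with h | h
    · -- m = a
      have hma : Real.pi / m * a = Real.pi := by
        rw [show m = a from h]; field_simp
      have hxb1 : 0 < Real.pi / m * b := by positivity
      have hxb2 : Real.pi / m * b ≤ Real.pi := by
        calc Real.pi / m * b ≤ Real.pi / m * m := by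
              have : 0 < Real.pi / m := by positivity
              nlinarith
          _ = Real.pi := by field_simp
      have hsb : 0 ≤ Real.sin (Real.pi / m * b) :=
        Real.sin_nonneg_of_nonneg_of_le_pi (le_of_lt hxb1) hxb2
      rw [hma, Real.sin_pi, Real.cos_pi]
      nlinarith
    · -- m = b
      have hmb : Real.pi / m * b = Real.pi := by
        rw [show m = b from h]; field_simp
      have hxa1 : 0 < Real.pi / m * a := by positivity
      have hxa2 : Real.pi / m * a ≤ Real.pi := by
        calc Real.pi / m * a ≤ Real.pi / m * m := by
              have : 0 < Real.pi / m := by positivity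
              nlinarith
          _ = Real.pi := by field_simp
      have hsa : 0 ≤ Real.sin (Real.pi / m * a) :=
        Real.sin_nonneg_of_nonneg_of_le_pi (le_of_lt hxa1) hxa2
      rw [hmb, Real.sin_pi, Real.cos_pi]
      nlinarith
  -- continuity
  have hcont : Continuous D := by
    rw [hDeq]
    fun_prop
  -- Part 2 : existence of a zero via IVT
  set ε : ℝ := L / 2 with hεdef
  have hε0 : 0 < ε := by positivity
  have hεL : ε < L := by linarith
  have hεU : ε ≤ U := by linarith
  have hDε : 0 < D ε := part1 ε ⟨hε0, hεL⟩
  have hsub := intermediate_value_Icc' hεU hcont.continuousOn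
  have h0mem : (0 : ℝ) ∈ Set.Icc (D U) (D ε) := ⟨hDU, le_of_lt hDε⟩
  obtain ⟨lam₀, hlam₀mem, hlam₀⟩ := hsub h0mem
  have hlam₀pos : 0 < lam₀ := lt_of_lt_of_le hε0 hlam₀mem.1
  have part2 : ∃ lam ∈ Set.Ioc (0:ℝ) U, D lam = 0 :=
    ⟨lam₀, ⟨hlam₀pos, hlam₀mem.2⟩, hlam₀⟩
  -- Part 3 : bounds on the infimum
  have hSmem : lam₀ ∈ {lam : ℝ | 0 < lam ∧ D lam = 0} := ⟨hlam₀pos, hlam₀⟩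
  have hlb : ∀ x ∈ {lam : ℝ | 0 < lam ∧ D lam = 0}, L ≤ x := by
    rintro x ⟨hx0, hxD⟩
    by_contra hcon
    push_neg at hcon
    exact absurd hxD (ne_of_gt (part1 x ⟨hx0, hcon⟩))
  have hbdd : BddBelow {lam : ℝ | 0 < lam ∧ D lam = 0} := ⟨L, hlb⟩
  refine ⟨part1, part2, le_csInf ⟨lam₀, hSmem⟩ hlb, ?_⟩
  exact le_trans (csInf_le hbdd hSmem) hlam₀mem.2
end

section
/- If either (q > p and b > a) or (q < p and b < a), then there exists λ with 0 < λ < π²/(a+b)² and D(λ) = 0. -/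
/-!
Write `k = √λ`. For `k (a + b) ≤ π/2` every sine and cosine in `D` is positive, so `D > 0`.
At `k = π/(a+b)` we have `k b = π - k a`, which collapses `D` to `((q - p)/2) sin(2π b/(a+b))`;
the sign conditions make this negative, and the intermediate value theorem yields a zero `k`
strictly inside `(0, π/(a+b))`, i.e. `λ = k²` strictly inside `(0, π²/(a+b)²)`.
-/

open Real Set

/-- The function `D` of the statement, as a function of `k = √λ`. -/
noncomputable def charDet (p q a b k : ℝ) : ℝ :=
  q * cos (k * b) * sin (k * a) + p * cos (k * a) * sin (k * b)

namespace charDet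

variable {p q a b : ℝ}

theorem continuous (p q a b : ℝ) : Continuous (charDet p q a b) := by
  unfold charDet; fun_prop

theorem pos_of_mul_add_le (hp : 0 < p) (hq : 0 < q) (ha : 0 < a) (hb : 0 < b) {k : ℝ}
    (hk : 0 < k) (hkab : k * (a + b) ≤ π / 2) : 0 < charDet p q a b k := by
  have hka : k * a ∈ Ioo 0 (π / 2) := ⟨by positivity, by nlinarith⟩
  have hkb : k * b ∈ Ioo 0 (π / 2) := ⟨by positivity, by nlinarith⟩
  have hsa := sin_pos_of_pos_of_lt_pi hka.1 (by linarith [hka.2, pi_pos])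
  have hsb := sin_pos_of_pos_of_lt_pi hkb.1 (by linarith [hkb.2, pi_pos])
  have hca := cos_pos_of_mem_Ioo ⟨by linarith [hka.1, pi_pos], hka.2⟩
  have hcb := cos_pos_of_mem_Ioo ⟨by linarith [hkb.1, pi_pos], hkb.2⟩
  unfold charDet
  positivity

theorem apply_pi_div_add (hab : a + b ≠ 0) :
    charDet p q a b (π / (a + b)) = (q - p) / 2 * sin (2 * π * b / (a + b)) := by
  have hkb : π / (a + b) * b = π - π / (a + b) * a := by field_simp; ring
  have h2b : 2 * π * b / (a + b) = 2 * π - 2 * (π / (a + b) * a) := by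
    field_simp; ring
  rw [charDet, hkb, h2b, cos_pi_sub, sin_pi_sub, sin_two_pi_sub, sin_two_mul]
  ring

theorem apply_pi_div_add_neg (ha : 0 < a) (hb : 0 < b)
    (hcase : (p < q ∧ a < b) ∨ (q < p ∧ b < a)) : charDet p q a b (π / (a + b)) < 0 := by
  have hab : 0 < a + b := by linarith
  rw [apply_pi_div_add hab.ne']
  rcases hcase with ⟨hpq, hlt⟩ | ⟨hpq, hlt⟩
  · have hsin : sin (2 * π * b / (a + b)) < 0 := by
      rw [← sin_sub_two_pi]
      apply sin_neg_of_neg_of_neg_pi_lt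
      · rw [sub_neg, div_lt_iff₀ hab]; nlinarith [pi_pos]
      · rw [lt_sub_iff_add_lt, lt_div_iff₀ hab]; nlinarith [pi_pos]
    exact mul_neg_of_pos_of_neg (by linarith) hsin
  · have hsin : 0 < sin (2 * π * b / (a + b)) := by
      apply sin_pos_of_pos_of_lt_pi (by positivity)
      rw [div_lt_iff₀ hab]; nlinarith [pi_pos]
    exact mul_neg_of_neg_of_pos (by linarith) hsin

end charDet

/-- Corollary A.3.  For
`D(λ) = q cos(√λ b) sin(√λ a) + p cos(√λ a) sin(√λ b)`, if either
(`q > p` and `b > a`) or (`q < p` and `b < a`), then `D` has a zero in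
`(0, π²/(a+b)²)`. -/
theorem lowest_eigenvalue_strict_bound (p q a b : ℝ)
    (hp : 0 < p) (hq : 0 < q) (ha : 0 < a) (hb : 0 < b)
    (hcase : (p < q ∧ a < b) ∨ (q < p ∧ b < a)) :
    ∃ lam : ℝ, 0 < lam ∧ lam < Real.pi ^ 2 / (a + b) ^ 2 ∧
      q * Real.cos (Real.sqrt lam * b) * Real.sin (Real.sqrt lam * a) +
        p * Real.cos (Real.sqrt lam * a) * Real.sin (Real.sqrt lam * b) = 0 := by
  have hab : 0 < a + b := by linarith
  have hpos : 0 < charDet p q a b (π / (2 * (a + b))) :=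
    charDet.pos_of_mul_add_le hp hq ha hb (by positivity) (by field_simp; rfl)
  have hle : π / (2 * (a + b)) ≤ π / (a + b) :=
    div_le_div_of_nonneg_left pi_pos.le hab (by linarith)
  obtain ⟨k, ⟨hk_lo, hk_hi⟩, hk⟩ := intermediate_value_Ioo' hle
    (charDet.continuous p q a b).continuousOn
    ⟨charDet.apply_pi_div_add_neg ha hb hcase, hpos⟩
  have hk0 : 0 < k := lt_trans (by positivity) hk_lo
  refine ⟨k ^ 2, by positivity, ?_, ?_⟩
  · rw [← div_pow]; exact pow_lt_pow_left₀ hk_hi hk0.le two_ne_zero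
  · rwa [sqrt_sq hk0.le]
end

section
/- Let β ∈ ℕ with β ≥ 2 and let ℓ : ℕ → ℝ with ℓ n > 0 for all n. For n ∈ ℕ put P_n = (Σ_{k=0}^n β^{2k} ℓ_k)·(Σ_{k=n}^∞ β^{−2k} ℓ_k), with tail sums and products taken in [0,∞]. Then: (a) lim_{n→∞} P_n = 0 if and only if ℓ_n → 0 as n → ∞; (b) sup_{n ∈ ℕ} P_n < ∞ if and only if sup_{n ∈ ℕ} ℓ_n < ∞. -/
/-!
Write `c = β²`. Keeping only the `k = n` terms of both factors gives `Pₙ ≥ ℓₙ²`.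
Conversely, bounding `ℓ` by `sup ℓ` on `[0, n]` and by `sup_{k ≥ n} ℓₖ` on `[n, ∞)` and
comparing both factors with geometric series gives
`Pₙ ≤ (1 - c⁻¹)⁻² · sup ℓ · sup_{k ≥ n} ℓₖ`, because the factors `cⁿ` and `c⁻ⁿ` cancel.
Both criteria follow from these two bounds.
-/

open Filter Topology
open scoped ENNReal

namespace ENNReal

lemma iSup_ofReal_lt_top_iff {ι : Type*} {f : ι → ℝ} :
    ⨆ i, ENNReal.ofReal (f i) < ∞ ↔ BddAbove (Set.range f) := by
  simp only [ENNReal.ofReal, iSup_coe_lt_top]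
  constructor
  · rintro ⟨B, hB⟩
    refine ⟨B, Set.forall_mem_range.2 fun i => ?_⟩
    exact (Real.le_coe_toNNReal (f i)).trans (NNReal.coe_le_coe.2 (hB ⟨i, rfl⟩))
  · rw [← Function.comp_def, Set.range_comp]
    exact Monotone.map_bddAbove fun _ _ => Real.toNNReal_le_toNNReal

lemma tendsto_ofReal_nhds_zero_iff {α : Type*} {l : Filter α} {f : α → ℝ}
    (hf : ∀ a, 0 ≤ f a) :
    Tendsto (fun a => ENNReal.ofReal (f a)) l (𝓝 0) ↔ Tendsto f l (𝓝 0) := by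
  refine ⟨fun h => ?_, fun h => by simpa using ENNReal.tendsto_ofReal h⟩
  have := (ENNReal.tendsto_toReal zero_ne_top).comp h
  simpa [Function.comp_def, ENNReal.toReal_ofReal (hf _)] using this

lemma tendsto_iSup_add_nhds_zero {u : ℕ → ℝ≥0∞} (hu : Tendsto u atTop (𝓝 0)) :
    Tendsto (fun n => ⨆ k, u (k + n)) atTop (𝓝 0) := by
  have hanti : Antitone fun n => ⨆ k, u (k + n) := fun m n hmn =>
    iSup_mono' fun k => ⟨k + (n - m), by rw [add_assoc, Nat.sub_add_cancel hmn]⟩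
  simpa [← limsup_eq_iInf_iSup_of_nat', hu.limsup_eq] using tendsto_atTop_iInf hanti

lemma sum_range_succ_pow_le {c : ℝ≥0∞} (hc0 : c ≠ 0) (hctop : c ≠ ∞) (n : ℕ) :
    ∑ k ∈ Finset.range (n + 1), c ^ k ≤ c ^ n * (1 - c⁻¹)⁻¹ := by
  have hreflect : ∀ j ∈ Finset.range (n + 1), c ^ (n - j) = c ^ n * c⁻¹ ^ j := by
    intro j hj
    rw [← Nat.sub_add_cancel (Nat.lt_succ_iff.mp (Finset.mem_range.mp hj)), pow_add, mul_assoc,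
      ← mul_pow, ENNReal.mul_inv_cancel hc0 hctop, one_pow, mul_one, Nat.add_sub_cancel]
  rw [← Finset.sum_range_reflect, Nat.add_sub_cancel, Finset.sum_congr rfl hreflect,
    ← Finset.mul_sum, ← ENNReal.tsum_geometric]
  exact mul_le_mul_right (ENNReal.sum_le_tsum _) _

end ENNReal

open ENNReal

/-- `Pₙ` of the exponential antitree is `antitreeProduct (β ^ 2) (ofReal ∘ ℓ) n`. -/
noncomputable def antitreeProduct (c : ℝ≥0∞) (L : ℕ → ℝ≥0∞) (n : ℕ) : ℝ≥0∞ :=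
  (∑ k ∈ Finset.range (n + 1), c ^ k * L k) * ∑' k, L (n + k) * c⁻¹ ^ (n + k)

section antitreeProduct

variable {c : ℝ≥0∞} {L : ℕ → ℝ≥0∞}

lemma sq_le_antitreeProduct (hc0 : c ≠ 0) (hctop : c ≠ ∞) (n : ℕ) :
    L n ^ 2 ≤ antitreeProduct c L n := by
  have hhead : c ^ n * L n ≤ ∑ k ∈ Finset.range (n + 1), c ^ k * L k :=
    Finset.single_le_sum (f := fun k => c ^ k * L k) (fun _ _ => zero_le)
      (Finset.self_mem_range_succ n)
  have htail : L n * c⁻¹ ^ n ≤ ∑' k, L (n + k) * c⁻¹ ^ (n + k) :=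
    ENNReal.le_tsum (f := fun k => L (n + k) * c⁻¹ ^ (n + k)) 0
  calc L n ^ 2 = (c * c⁻¹) ^ n * L n ^ 2 := by
        rw [ENNReal.mul_inv_cancel hc0 hctop, one_pow, one_mul]
    _ = (c ^ n * L n) * (L n * c⁻¹ ^ n) := by ring
    _ ≤ antitreeProduct c L n := mul_le_mul' hhead htail

lemma antitreeProduct_le (hc0 : c ≠ 0) (hctop : c ≠ ∞) {M M' : ℝ≥0∞} {n : ℕ}
    (hM : ∀ k, L k ≤ M) (hM' : ∀ k, L (n + k) ≤ M') :
    antitreeProduct c L n ≤ (1 - c⁻¹)⁻¹ ^ 2 * M * M' := by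
  have hhead : ∑ k ∈ Finset.range (n + 1), c ^ k * L k ≤ c ^ n * (1 - c⁻¹)⁻¹ * M :=
    calc ∑ k ∈ Finset.range (n + 1), c ^ k * L k
        ≤ (∑ k ∈ Finset.range (n + 1), c ^ k) * M := by
          rw [Finset.sum_mul]; gcongr with k; exact hM k
      _ ≤ c ^ n * (1 - c⁻¹)⁻¹ * M := by
          gcongr; exact sum_range_succ_pow_le hc0 hctop n
  have htail : ∑' k, L (n + k) * c⁻¹ ^ (n + k) ≤ M' * (c⁻¹ ^ n * (1 - c⁻¹)⁻¹) :=
    calc ∑' k, L (n + k) * c⁻¹ ^ (n + k)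
        ≤ ∑' k, M' * c⁻¹ ^ (n + k) := ENNReal.tsum_le_tsum fun k => by gcongr; exact hM' k
      _ = M' * (c⁻¹ ^ n * (1 - c⁻¹)⁻¹) := by
          simp only [pow_add, ENNReal.tsum_mul_left, ENNReal.tsum_geometric]
  calc antitreeProduct c L n
      ≤ (c ^ n * (1 - c⁻¹)⁻¹ * M) * (M' * (c⁻¹ ^ n * (1 - c⁻¹)⁻¹)) :=
        mul_le_mul' hhead htail
    _ = (c * c⁻¹) ^ n * ((1 - c⁻¹)⁻¹ ^ 2 * M * M') := by ring
    _ = (1 - c⁻¹)⁻¹ ^ 2 * M * M' := by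
        rw [ENNReal.mul_inv_cancel hc0 hctop, one_pow, one_mul]

lemma tendsto_nhds_zero_of_tendsto_antitreeProduct (hc0 : c ≠ 0) (hctop : c ≠ ∞)
    (hP : Tendsto (antitreeProduct c L) atTop (𝓝 0)) : Tendsto L atTop (𝓝 0) := by
  have hsq : Tendsto (fun n => L n ^ 2) atTop (𝓝 0) :=
    tendsto_of_tendsto_of_tendsto_of_le_of_le tendsto_const_nhds hP (fun _ => zero_le)
      (sq_le_antitreeProduct hc0 hctop)
  have hsqrt : ∀ x : ℝ≥0∞, (x ^ 2) ^ ((2 : ℕ) : ℝ)⁻¹ = x :=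
    ENNReal.pow_rpow_inv_natCast two_ne_zero
  have hroot := ((ENNReal.continuous_rpow_const (y := ((2 : ℕ) : ℝ)⁻¹)).tendsto 0).comp hsq
  simp only [Function.comp_def, hsqrt] at hroot
  rwa [ENNReal.zero_rpow_of_pos (by positivity)] at hroot

lemma inv_one_sub_inv_sq_ne_top (hc : 1 < c) : (1 - c⁻¹)⁻¹ ^ 2 ≠ ∞ :=
  pow_ne_top (ENNReal.inv_ne_top.2 (tsub_pos_of_lt (ENNReal.inv_lt_one.2 hc)).ne')

lemma tendsto_antitreeProduct_nhds_zero (hc : 1 < c) (hctop : c ≠ ∞) (hL : ⨆ k, L k ≠ ∞)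
    (hL0 : Tendsto L atTop (𝓝 0)) : Tendsto (antitreeProduct c L) atTop (𝓝 0) := by
  have hbound :
      ∀ n, antitreeProduct c L n ≤ (1 - c⁻¹)⁻¹ ^ 2 * (⨆ k, L k) * ⨆ k, L (k + n) :=
    fun n => antitreeProduct_le (zero_le.trans_lt hc).ne' hctop (le_iSup L)
      fun k => le_iSup_of_le k (by rw [add_comm])
  have hlim := ENNReal.Tendsto.const_mul (tendsto_iSup_add_nhds_zero hL0)
    (.inr (mul_ne_top (inv_one_sub_inv_sq_ne_top hc) hL))
  rw [mul_zero] at hlim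
  exact tendsto_of_tendsto_of_tendsto_of_le_of_le tendsto_const_nhds hlim (fun _ => zero_le)
    hbound

lemma iSup_antitreeProduct_lt_top_iff (hc : 1 < c) (hctop : c ≠ ∞) :
    ⨆ n, antitreeProduct c L n < ∞ ↔ ⨆ n, L n < ∞ := by
  have hc0 : c ≠ 0 := (zero_le.trans_lt hc).ne'
  constructor
  · intro hP
    have hsq : (⨆ n, L n) ^ 2 < ∞ := by
      rw [ENNReal.iSup_pow]
      exact (iSup_mono (sq_le_antitreeProduct hc0 hctop)).trans_lt hP
    simpa using hsq
  · intro hL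
    have hbound : ∀ n, antitreeProduct c L n ≤ (1 - c⁻¹)⁻¹ ^ 2 * (⨆ k, L k) * ⨆ k, L k :=
      fun n => antitreeProduct_le hc0 hctop (le_iSup L) fun k => le_iSup L (n + k)
    exact (iSup_le hbound).trans_lt <| lt_top_iff_ne_top.2 <|
      mul_ne_top (mul_ne_top (inv_one_sub_inv_sq_ne_top hc) hL.ne) hL.ne

end antitreeProduct

/-- Proposition 10.1(iii) and (v), exponentially growing
antitrees `sₙ = βⁿ`.  With
`Pₙ = (Σ_{k ≤ n} β^{2k} ℓₖ)(Σ_{k ≥ n} β^{−2k} ℓₖ)` (in `[0,∞]`):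
(a) `Pₙ → 0` iff `ℓₙ → 0`;  (b) `sup_n Pₙ < ∞` iff `sup_n ℓₙ < ∞`. -/
theorem exponential_antitree_criteria (β : ℕ) (hβ : 2 ≤ β)
    (ℓ : ℕ → ℝ) (hℓ : ∀ n, 0 < ℓ n) :
    (Tendsto
      (fun n : ℕ =>
        (∑ k ∈ Finset.range (n + 1), ENNReal.ofReal ((β : ℝ) ^ (2 * k) * ℓ k)) *
          ∑' k : ℕ, ENNReal.ofReal (ℓ (n + k) / (β : ℝ) ^ (2 * (n + k))))
      atTop (𝓝 0) ↔ Tendsto ℓ atTop (𝓝 0)) ∧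
    ((⨆ n : ℕ,
        (∑ k ∈ Finset.range (n + 1), ENNReal.ofReal ((β : ℝ) ^ (2 * k) * ℓ k)) *
          ∑' k : ℕ, ENNReal.ofReal (ℓ (n + k) / (β : ℝ) ^ (2 * (n + k)))) < ∞ ↔
      BddAbove (Set.range ℓ)) := by
  have hc : 1 < (β : ℝ≥0∞) ^ 2 := by
    calc (1 : ℝ≥0∞) < 2 ^ 2 := by norm_num
      _ ≤ (β : ℝ≥0∞) ^ 2 := by gcongr; exact_mod_cast hβ
  have hctop : (β : ℝ≥0∞) ^ 2 ≠ ∞ := pow_ne_top (natCast_ne_top β)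
  have hℓ' : ∀ n, 0 ≤ ℓ n := fun n => (hℓ n).le
  have hP : (fun n : ℕ =>
      (∑ k ∈ Finset.range (n + 1), ENNReal.ofReal ((β : ℝ) ^ (2 * k) * ℓ k)) *
        ∑' k : ℕ, ENNReal.ofReal (ℓ (n + k) / (β : ℝ) ^ (2 * (n + k)))) =
      antitreeProduct ((β : ℝ≥0∞) ^ 2) fun k => ENNReal.ofReal (ℓ k) := by
    funext n
    simp only [antitreeProduct, div_eq_mul_inv, ENNReal.ofReal_mul (hℓ' _),
      ENNReal.ofReal_mul (pow_nonneg (Nat.cast_nonneg β) _), ENNReal.ofReal_inv_of_pos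
      (pow_pos (Nat.cast_pos.2 (by omega : 0 < β)) _), ENNReal.ofReal_pow (Nat.cast_nonneg β),
      ENNReal.ofReal_natCast, ← pow_mul, ENNReal.inv_pow]
  rw [hP]
  refine ⟨⟨fun h => ?_, fun h => ?_⟩, (iSup_antitreeProduct_lt_top_iff hc hctop).trans
    iSup_ofReal_lt_top_iff⟩
  · exact (tendsto_ofReal_nhds_zero_iff hℓ').1
      (tendsto_nhds_zero_of_tendsto_antitreeProduct (zero_le.trans_lt hc).ne' hctop h)
  · exact tendsto_antitreeProduct_nhds_zero hc hctop
      (iSup_ofReal_lt_top_iff.2 h.bddAbove_range).ne ((tendsto_ofReal_nhds_zero_iff hℓ').2 h)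
end

section
/- Let β ∈ ℕ with β ≥ 2 and let ℓ : ℕ → ℝ with ℓ n > 0 for all n. If Σ_{n=0}^∞ β^{2n} ℓ_n² < ∞, then Σ_{n=0}^∞ β^{−2n} ℓ_n Σ_{k=0}^{n−1} β^{2k} ℓ_k < ∞. -/
/-!
Put `aₙ = βⁿ ℓₙ`. Square-summability of `a` only enters through the resulting bound `|aₙ| ≤ C`.
Then `|ℓₙ| ≤ C β⁻ⁿ` and the inner sum is at most `C Σ_{k<n} βᵏ ≤ C βⁿ / (β - 1)`, so the `n`-th term
is at most `C² / (β - 1) · β⁻²ⁿ`, a convergent geometric series.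
-/

open Finset

theorem abs_le_sqrt_tsum_of_summable_sq {ι : Type*} {f : ι → ℝ}
    (h : Summable fun i => f i ^ 2) (i : ι) : |f i| ≤ √(∑' j, f j ^ 2) :=
  Real.abs_le_sqrt (h.le_tsum i fun _ _ => sq_nonneg _)

theorem geom_sum_le_pow_div_sub_one {q : ℝ} (hq : 1 < q) (n : ℕ) :
    ∑ k ∈ range n, q ^ k ≤ q ^ n / (q - 1) := by
  rw [geom_sum_eq hq.ne']
  gcongr
  linarith

section

variable {q : ℝ} {ℓ : ℕ → ℝ} {C : ℝ}

theorem abs_sum_range_pow_two_mul_le (hq : 1 < q) (hℓ : ∀ n, |q ^ n * ℓ n| ≤ C) (n : ℕ) :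
    |∑ k ∈ range n, q ^ (2 * k) * ℓ k| ≤ C * q ^ n / (q - 1) := by
  have hq0 : 0 ≤ q := by linarith
  calc |∑ k ∈ range n, q ^ (2 * k) * ℓ k|
      ≤ ∑ k ∈ range n, q ^ k * |q ^ k * ℓ k| := by
        refine (abs_sum_le_sum_abs _ _).trans_eq (sum_congr rfl fun k _ => ?_)
        rw [two_mul, pow_add, mul_assoc, abs_mul, abs_of_nonneg (pow_nonneg hq0 k)]
    _ ≤ ∑ k ∈ range n, q ^ k * C := by
        gcongr with k
        exact hℓ k
    _ = C * ∑ k ∈ range n, q ^ k := by rw [← sum_mul, mul_comm]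
    _ ≤ C * (q ^ n / (q - 1)) := by
        have hC : 0 ≤ C := (abs_nonneg _).trans (hℓ 0)
        gcongr
        exact geom_sum_le_pow_div_sub_one hq n
    _ = C * q ^ n / (q - 1) := by ring

theorem summable_div_pow_two_mul_sum_of_abs_pow_mul_le (hq : 1 < q)
    (hℓ : ∀ n, |q ^ n * ℓ n| ≤ C) :
    Summable fun n : ℕ => ℓ n / q ^ (2 * n) * ∑ k ∈ range n, q ^ (2 * k) * ℓ k := by
  have hq0 : 0 < q := by linarith
  have hC : 0 ≤ C := (abs_nonneg _).trans (hℓ 0)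
  have hgeom : Summable fun n : ℕ => C * C / (q - 1) * (q ^ 2)⁻¹ ^ n :=
    (summable_geometric_of_lt_one (by positivity) (inv_lt_one_of_one_lt₀ (by nlinarith))).mul_left _
  refine .of_norm_bounded hgeom fun n => ?_
  have hℓn : |ℓ n| ≤ C / q ^ n := by
    have h := hℓ n
    rw [abs_mul, abs_of_pos (pow_pos hq0 n)] at h
    rwa [le_div_iff₀ (pow_pos hq0 n), mul_comm]
  calc ‖ℓ n / q ^ (2 * n) * ∑ k ∈ range n, q ^ (2 * k) * ℓ k‖
      = |ℓ n| / q ^ (2 * n) * |∑ k ∈ range n, q ^ (2 * k) * ℓ k| := by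
        rw [Real.norm_eq_abs, abs_mul, abs_div, abs_of_pos (pow_pos hq0 _)]
    _ ≤ C / q ^ n / q ^ (2 * n) * (C * q ^ n / (q - 1)) := by
        gcongr
        exact abs_sum_range_pow_two_mul_le hq hℓ n
    _ = C * C / (q - 1) * (q ^ 2)⁻¹ ^ n := by
        have : q ^ n ≠ 0 := (pow_pos hq0 n).ne'
        have : q - 1 ≠ 0 := by linarith
        rw [inv_pow, ← pow_mul]
        field_simp

end

theorem exponential_antitree_trace_class_general (β : ℕ) (hβ : 2 ≤ β)
    (ℓ : ℕ → ℝ)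
    (h : Summable fun n : ℕ => (β : ℝ) ^ (2 * n) * ℓ n ^ 2) :
    Summable fun n : ℕ =>
      ℓ n / (β : ℝ) ^ (2 * n) * ∑ k ∈ Finset.range n, (β : ℝ) ^ (2 * k) * ℓ k := by
  have hβ1 : 1 < (β : ℝ) := by exact_mod_cast hβ
  have hsq : ∀ n, ((β : ℝ) ^ n * ℓ n) ^ 2 = (β : ℝ) ^ (2 * n) * ℓ n ^ 2 := fun n => by
    rw [mul_pow, ← pow_mul, mul_comm n]
  simp only [← hsq] at h
  exact summable_div_pow_two_mul_sum_of_abs_pow_mul_le hβ1 (abs_le_sqrt_tsum_of_summable_sq h)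

/-- core of Proposition 10.1(iv).  For `β ≥ 2`:
`Σ β^{2n} ℓₙ² < ∞` implies `Σₙ β^{−2n} ℓₙ Σ_{k<n} β^{2k} ℓₖ < ∞`. -/
theorem exponential_antitree_trace_class (β : ℕ) (hβ : 2 ≤ β)
    (ℓ : ℕ → ℝ) (hℓ : ∀ n, 0 < ℓ n)
    (h : Summable fun n : ℕ => (β : ℝ) ^ (2 * n) * ℓ n ^ 2) :
    Summable fun n : ℕ =>
      ℓ n / (β : ℝ) ^ (2 * n) * ∑ k ∈ Finset.range n, (β : ℝ) ^ (2 * k) * ℓ k :=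
  exponential_antitree_trace_class_general β hβ ℓ h
end

section
/- Let q ∈ ℕ with q ≥ 1 and let ℓ : ℕ → ℝ with ℓ n > 0 for all n. If (n+1)·ℓ_n → 0 as n → ∞, then lim_{n→∞} (Σ_{k=0}^n (k+1)^q (k+2)^q ℓ_k)·(Σ_{k=n}^∞ ℓ_k/((k+1)^q (k+2)^q)) = 0, with tail sums and products taken in [0,∞]. -/
open Filter Topology
open scoped ENNReal

/-!
Let `M` bound `(k+1) ℓₖ` for all `k` and `δ` bound it for `k ≥ n`. Writing `w x = x^q (x+1)^q`,
the head sum has `n+1` terms, each at most `M (n+1)^(q-1) (n+2)^q`, so it is at most `M w(n+1)`.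
For `x ≥ n+1`, `ℓ/w(x) ≤ δ/(x w(x)) ≤ δ (n+1)^(1-2q) / (x(x+1))` because `q ≥ 1`, and the
telescoping sum `∑_{x ≥ n+1} 1/(x(x+1)) = 1/(n+1)` bounds the tail by `δ/(n+1)^(2q)`.
The product is therefore at most `2^q M δ`, and `δ → 0`.
-/

lemma sum_range_one_div_mul_add_one {a : ℝ} (ha : 0 < a) (m : ℕ) :
    ∑ k ∈ Finset.range m, 1 / ((a + k) * (a + k + 1)) = 1 / a - 1 / (a + m) := by
  induction m with
  | zero => simp
  | succ m ih =>
    have : 0 < a + m := by positivity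
    rw [Finset.sum_range_succ, ih]
    push_cast
    field_simp
    ring

lemma tsum_ofReal_one_div_mul_add_one_le {a : ℝ} (ha : 0 < a) :
    ∑' k : ℕ, ENNReal.ofReal (1 / ((a + k) * (a + k + 1))) ≤ ENNReal.ofReal (1 / a) := by
  refine ENNReal.tsum_le_of_sum_range_le fun m => ?_
  rw [← ENNReal.ofReal_sum_of_nonneg fun k _ => by positivity, sum_range_one_div_mul_add_one ha]
  exact ENNReal.ofReal_le_ofReal (sub_le_self _ (by positivity))

lemma exists_pos_ofReal_mul_le (C : ℝ) {ε : ℝ≥0∞} (hε : 0 < ε) :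
    ∃ δ > 0, ENNReal.ofReal (C * δ) ≤ ε := by
  have hlim : Tendsto (fun δ : ℝ => ENNReal.ofReal (C * δ)) (𝓝[>] 0) (𝓝 0) := by
    simpa using (ENNReal.tendsto_ofReal ((continuous_const_mul C).tendsto 0)).mono_left
      nhdsWithin_le_nhds
  obtain ⟨δ, hδε, hδ⟩ := ((hlim.eventually (ge_mem_nhds hε)).and self_mem_nhdsWithin).exists
  exact ⟨δ, hδ, hδε⟩

lemma div_pow_mul_pow_le {q : ℕ} (hq : 1 ≤ q) {a x y δ : ℝ} (ha : 0 < a) (hax : a ≤ x)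
    (hδ : 0 ≤ δ) (hy : x * y ≤ δ) :
    y / (x ^ q * (x + 1) ^ q) ≤ δ / a ^ (2 * q) * (a / (x * (x + 1))) := by
  obtain ⟨p, rfl⟩ := Nat.exists_eq_add_of_le' hq
  have hx : 0 < x := ha.trans_le hax
  have key : a ^ (2 * (p + 1)) * (x * (x + 1)) ≤ a * x * (x ^ (p + 1) * (x + 1) ^ (p + 1)) :=
    calc a ^ (2 * (p + 1)) * (x * (x + 1)) = a * (a ^ (p + 1) * a ^ p) * (x * (x + 1)) := by ring
      _ ≤ a * (x ^ (p + 1) * (x + 1) ^ p) * (x * (x + 1)) := by gcongr; linarith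
      _ = a * x * (x ^ (p + 1) * (x + 1) ^ (p + 1)) := by ring
  calc y / (x ^ (p + 1) * (x + 1) ^ (p + 1))
      ≤ δ / x / (x ^ (p + 1) * (x + 1) ^ (p + 1)) := by
        gcongr
        rw [le_div_iff₀ hx]
        linarith
    _ = δ / a ^ (2 * (p + 1)) * (a ^ (2 * (p + 1)) / (x * (x ^ (p + 1) * (x + 1) ^ (p + 1)))) := by
        field_simp
    _ ≤ δ / a ^ (2 * (p + 1)) * (a / (x * (x + 1))) := by
        refine mul_le_mul_of_nonneg_left ?_ (by positivity)
        rw [div_le_div_iff₀ (by positivity) (by positivity)]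
        linarith

lemma sum_ofReal_antitree_head_le {q : ℕ} (hq : 1 ≤ q) (ℓ : ℕ → ℝ) {M : ℝ} (hM0 : 0 ≤ M)
    (hM : ∀ k : ℕ, ((k : ℝ) + 1) * ℓ k ≤ M) (n : ℕ) :
    ∑ k ∈ Finset.range (n + 1), ENNReal.ofReal (((k : ℝ) + 1) ^ q * ((k : ℝ) + 2) ^ q * ℓ k)
      ≤ ENNReal.ofReal (M * (((n : ℝ) + 1) ^ q * ((n : ℝ) + 2) ^ q)) := by
  obtain ⟨p, rfl⟩ := Nat.exists_eq_add_of_le' hq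
  calc _ ≤ ∑ k ∈ Finset.range (n + 1),
          ENNReal.ofReal (M * (((n : ℝ) + 1) ^ p * ((n : ℝ) + 2) ^ (p + 1))) := by
        refine Finset.sum_le_sum fun k hk => ENNReal.ofReal_le_ofReal ?_
        have hkn : (k : ℝ) ≤ n := by exact_mod_cast Nat.lt_succ_iff.1 (Finset.mem_range.1 hk)
        calc ((k : ℝ) + 1) ^ (p + 1) * ((k : ℝ) + 2) ^ (p + 1) * ℓ k
            = ((k + 1) * ℓ k) * ((k + 1) ^ p * (k + 2) ^ (p + 1)) := by ring
          _ ≤ M * (((n : ℝ) + 1) ^ p * ((n : ℝ) + 2) ^ (p + 1)) :=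
            mul_le_mul (hM k) (by gcongr) (by positivity) hM0
    _ = _ := by
        rw [← ENNReal.ofReal_sum_of_nonneg fun _ _ => by positivity, Finset.sum_const,
          Finset.card_range, nsmul_eq_mul]
        congr 1
        push_cast
        ring

lemma tsum_ofReal_antitree_tail_le {q : ℕ} (hq : 1 ≤ q) (ℓ : ℕ → ℝ) (n : ℕ) {δ : ℝ}
    (hδ : 0 ≤ δ) (hℓ : ∀ k, n ≤ k → ((k : ℝ) + 1) * ℓ k ≤ δ) :
    ∑' k : ℕ, ENNReal.ofReal (ℓ (n + k) / (((n : ℝ) + k + 1) ^ q * ((n : ℝ) + k + 2) ^ q))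
      ≤ ENNReal.ofReal (δ / ((n : ℝ) + 1) ^ (2 * q)) := by
  set a : ℝ := n + 1
  have ha : 0 < a := by positivity
  calc _ ≤ ∑' k : ℕ, ENNReal.ofReal (δ / a ^ (2 * q)) *
          (ENNReal.ofReal a * ENNReal.ofReal (1 / ((a + k) * (a + k + 1)))) := by
        refine ENNReal.tsum_le_tsum fun k => ?_
        rw [← ENNReal.ofReal_mul ha.le, mul_one_div, ← ENNReal.ofReal_mul (by positivity)]
        refine ENNReal.ofReal_le_ofReal ?_
        have hx : (n : ℝ) + k + 1 = a + k := by ring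
        have hx' : (n : ℝ) + k + 2 = a + k + 1 := by ring
        rw [hx, hx']
        refine div_pow_mul_pow_le hq ha (by simp) hδ ?_
        simpa [hx] using hℓ (n + k) (Nat.le_add_right n k)
    _ = ENNReal.ofReal (δ / a ^ (2 * q)) * ENNReal.ofReal a *
          ∑' k : ℕ, ENNReal.ofReal (1 / ((a + k) * (a + k + 1))) := by
        rw [ENNReal.tsum_mul_left, ENNReal.tsum_mul_left, mul_assoc]
    _ ≤ ENNReal.ofReal (δ / a ^ (2 * q)) * ENNReal.ofReal a * ENNReal.ofReal (1 / a) := by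
        gcongr
        exact tsum_ofReal_one_div_mul_add_one_le ha
    _ = ENNReal.ofReal (δ / a ^ (2 * q)) := by
        rw [mul_assoc, ← ENNReal.ofReal_mul ha.le, mul_one_div_cancel ha.ne', ENNReal.ofReal_one,
          mul_one]

theorem polynomial_antitree_discreteness_general (q : ℕ) (hq : 1 ≤ q)
    (ℓ : ℕ → ℝ)
    (h : Tendsto (fun n : ℕ => ((n : ℝ) + 1) * ℓ n) atTop (𝓝 0)) :
    Tendsto
      (fun n : ℕ =>
        (∑ k ∈ Finset.range (n + 1),
            ENNReal.ofReal (((k : ℝ) + 1) ^ q * ((k : ℝ) + 2) ^ q * ℓ k)) *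
          ∑' k : ℕ,
            ENNReal.ofReal (ℓ (n + k) /
              (((n : ℝ) + (k : ℝ) + 1) ^ q * ((n : ℝ) + (k : ℝ) + 2) ^ q)))
      atTop (𝓝 0) := by
  obtain ⟨M, hM0, hM⟩ : ∃ M, 0 ≤ M ∧ ∀ k : ℕ, ((k : ℝ) + 1) * ℓ k ≤ M := by
    obtain ⟨M, hM⟩ := h.bddAbove_range
    exact ⟨max M 0, le_max_right _ _, fun k => (hM ⟨k, rfl⟩).trans (le_max_left _ _)⟩
  refine ENNReal.tendsto_nhds_zero.2 fun ε hε => ?_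
  obtain ⟨δ, hδ, hδε⟩ := exists_pos_ofReal_mul_le (2 ^ q * M) hε
  filter_upwards [eventually_forall_ge_atTop.2 (h.eventually (ge_mem_nhds hδ))] with n hn
  have hweight : ((n : ℝ) + 1) ^ q * ((n : ℝ) + 2) ^ q ≤ 2 ^ q * ((n : ℝ) + 1) ^ (2 * q) := by
    rw [← mul_pow, pow_mul, ← mul_pow]
    refine pow_le_pow_left₀ (by positivity) ?_ q
    nlinarith [n.cast_nonneg (α := ℝ)]
  calc _ ≤ ENNReal.ofReal (M * (((n : ℝ) + 1) ^ q * ((n : ℝ) + 2) ^ q)) *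
          ENNReal.ofReal (δ / ((n : ℝ) + 1) ^ (2 * q)) :=
        mul_le_mul' (sum_ofReal_antitree_head_le hq ℓ hM0 hM n)
          (tsum_ofReal_antitree_tail_le hq ℓ n hδ.le hn)
    _ ≤ ENNReal.ofReal (2 ^ q * M * δ) := by
        rw [← ENNReal.ofReal_mul (by positivity)]
        refine ENNReal.ofReal_le_ofReal ?_
        rw [mul_div_assoc', div_le_iff₀ (by positivity)]
        calc M * (((n : ℝ) + 1) ^ q * ((n : ℝ) + 2) ^ q) * δ
            ≤ M * (2 ^ q * ((n : ℝ) + 1) ^ (2 * q)) * δ := by gcongr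
          _ = 2 ^ q * M * δ * ((n : ℝ) + 1) ^ (2 * q) := by ring
    _ ≤ ε := hδε

/-- sufficiency part of Proposition 10.2(iii), polynomially
growing antitrees `sₙ = (n+1)^q`.  If `(n+1)·ℓₙ → 0`, then
`(Σ_{k ≤ n} (k+1)^q (k+2)^q ℓₖ)(Σ_{k ≥ n} ℓₖ/((k+1)^q (k+2)^q)) → 0` in `[0,∞]`. -/
theorem polynomial_antitree_discreteness (q : ℕ) (hq : 1 ≤ q)
    (ℓ : ℕ → ℝ) (hℓ : ∀ n, 0 < ℓ n)
    (h : Tendsto (fun n : ℕ => ((n : ℝ) + 1) * ℓ n) atTop (𝓝 0)) :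
    Tendsto
      (fun n : ℕ =>
        (∑ k ∈ Finset.range (n + 1),
            ENNReal.ofReal (((k : ℝ) + 1) ^ q * ((k : ℝ) + 2) ^ q * ℓ k)) *
          ∑' k : ℕ,
            ENNReal.ofReal (ℓ (n + k) /
              (((n : ℝ) + (k : ℝ) + 1) ^ q * ((n : ℝ) + (k : ℝ) + 2) ^ q)))
      atTop (𝓝 0) :=
  polynomial_antitree_discreteness_general q hq ℓ h
end

section
/- Let q ∈ ℕ with q ≥ 1 and let ℓ : ℕ → ℝ with ℓ n > 0 for all n. If Σ_{n=0}^∞ (n+1)^{2q} ℓ_n² < ∞, then Σ_{n=0}^∞ (ℓ_n/((n+1)^q (n+2)^q))·Σ_{k=0}^{n−1} (k+1)^q (k+2)^q ℓ_k < ∞. -/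
/-!
Put `aₙ = (n+1)^q ℓₙ`, which is square summable, and `Sₙ = Σ_{k<n} aₖ`. Since `(k+2)^q ≤ (n+1)^q`
for `k < n`, and `(n+1)² ≤ (n+1)^q (n+2)^q` as `q ≥ 1`, the `n`-th term is at most
`aₙ Sₙ / (n+1)²`. By Cauchy–Schwarz `Sₙ² ≤ n Σ aₖ²`, so
`aₙ Sₙ / (n+1)² ≤ (aₙ² + Sₙ² / (n+1)⁴) / 2` is dominated by `aₙ²` plus a multiple of `1/(n+1)²`.
-/

open Finset

theorem sq_sum_range_le_mul_tsum_sq {a : ℕ → ℝ} (ha : Summable fun n => a n ^ 2) (n : ℕ) :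
    (∑ k ∈ range n, a k) ^ 2 ≤ n * ∑' k, a k ^ 2 :=
  calc (∑ k ∈ range n, a k) ^ 2 ≤ n * ∑ k ∈ range n, a k ^ 2 := by
        simpa using sq_sum_le_card_mul_sum_sq (s := range n) (f := a)
    _ ≤ n * ∑' k, a k ^ 2 := by
        gcongr
        exact ha.sum_le_tsum _ fun k _ => sq_nonneg (a k)

theorem summable_one_div_nat_add_one_sq : Summable fun n : ℕ => 1 / ((n : ℝ) + 1) ^ 2 := by
  simpa using (summable_nat_add_iff (f := fun n : ℕ => 1 / (n : ℝ) ^ 2) 1).mpr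
    (Real.summable_one_div_nat_pow.mpr one_lt_two)

theorem summable_mul_sum_range_div_sq {a : ℕ → ℝ} (ha : Summable fun n => a n ^ 2) :
    Summable fun n : ℕ => a n * (∑ k ∈ range n, a k) / ((n : ℝ) + 1) ^ 2 := by
  set A := ∑' k, a k ^ 2
  refine Summable.of_norm_bounded
    ((ha.add (summable_one_div_nat_add_one_sq.mul_left A)).div_const 2) fun n => ?_
  set S := ∑ k ∈ range n, a k
  have hA : 0 ≤ A := tsum_nonneg fun k => sq_nonneg (a k)
  have hy : (S / ((n : ℝ) + 1) ^ 2) ^ 2 ≤ A * (1 / ((n : ℝ) + 1) ^ 2) :=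
    calc (S / ((n : ℝ) + 1) ^ 2) ^ 2 = S ^ 2 / (((n : ℝ) + 1) ^ 2) ^ 2 := div_pow ..
      _ ≤ ((n : ℝ) + 1) ^ 2 * A / (((n : ℝ) + 1) ^ 2) ^ 2 := by
        gcongr
        nlinarith [sq_sum_range_le_mul_tsum_sq ha n]
      _ = A * (1 / ((n : ℝ) + 1) ^ 2) := by field_simp
  rw [Real.norm_eq_abs, mul_div_assoc, abs_mul]
  nlinarith [two_mul_le_add_sq |a n| |S / ((n : ℝ) + 1) ^ 2|, sq_abs (a n),
    sq_abs (S / ((n : ℝ) + 1) ^ 2)]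

theorem sum_range_mul_pow_succ_le {q : ℕ} {ℓ : ℕ → ℝ} (hℓ : ∀ n, 0 ≤ ℓ n) (n : ℕ) :
    ∑ k ∈ range n, ((k : ℝ) + 1) ^ q * ((k : ℝ) + 2) ^ q * ℓ k ≤
      ((n : ℝ) + 1) ^ q * ∑ k ∈ range n, ((k : ℝ) + 1) ^ q * ℓ k := by
  rw [mul_sum]
  refine sum_le_sum fun k hk => ?_
  have hkn : (k : ℝ) + 2 ≤ (n : ℝ) + 1 := by
    have hk' := mem_range.mp hk
    exact_mod_cast (by omega : k + 2 ≤ n + 1)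
  calc ((k : ℝ) + 1) ^ q * ((k : ℝ) + 2) ^ q * ℓ k
      = ((k : ℝ) + 2) ^ q * (((k : ℝ) + 1) ^ q * ℓ k) := by ring
    _ ≤ ((n : ℝ) + 1) ^ q * (((k : ℝ) + 1) ^ q * ℓ k) := by
      gcongr
      exact mul_nonneg (by positivity) (hℓ k)

theorem div_mul_sum_range_mul_pow_succ_le {q : ℕ} (hq : 1 ≤ q) {ℓ : ℕ → ℝ}
    (hℓ : ∀ n, 0 ≤ ℓ n) (n : ℕ) :
    ℓ n / (((n : ℝ) + 1) ^ q * ((n : ℝ) + 2) ^ q) *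
        ∑ k ∈ range n, ((k : ℝ) + 1) ^ q * ((k : ℝ) + 2) ^ q * ℓ k ≤
      ((n : ℝ) + 1) ^ q * ℓ n * (∑ k ∈ range n, ((k : ℝ) + 1) ^ q * ℓ k) /
        ((n : ℝ) + 1) ^ 2 := by
  set S := ∑ k ∈ range n, ((k : ℝ) + 1) ^ q * ℓ k
  have hS : 0 ≤ S := sum_nonneg fun k _ => mul_nonneg (by positivity) (hℓ k)
  have hden : ((n : ℝ) + 1) ^ 2 ≤ ((n : ℝ) + 1) ^ q * ((n : ℝ) + 2) ^ q := by
    have hq₀ : q ≠ 0 := by omega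
    rw [sq]
    gcongr
    · exact le_self_pow₀ (by simp) hq₀
    · calc (n : ℝ) + 1 ≤ (n : ℝ) + 2 := by linarith
        _ ≤ ((n : ℝ) + 2) ^ q := le_self_pow₀ (by linarith) hq₀
  calc ℓ n / (((n : ℝ) + 1) ^ q * ((n : ℝ) + 2) ^ q) *
        ∑ k ∈ range n, ((k : ℝ) + 1) ^ q * ((k : ℝ) + 2) ^ q * ℓ k
      ≤ ℓ n / (((n : ℝ) + 1) ^ q * ((n : ℝ) + 2) ^ q) * (((n : ℝ) + 1) ^ q * S) := by
        gcongr
        · exact div_nonneg (hℓ n) (by positivity)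
        · exact sum_range_mul_pow_succ_le hℓ n
    _ = ((n : ℝ) + 1) ^ q * ℓ n * S / (((n : ℝ) + 1) ^ q * ((n : ℝ) + 2) ^ q) := by ring
    _ ≤ ((n : ℝ) + 1) ^ q * ℓ n * S / ((n : ℝ) + 1) ^ 2 := by
        gcongr
        exact mul_nonneg (mul_nonneg (by positivity) (hℓ n)) hS

/-- core of Proposition 10.2(iv).  For `sₙ = (n+1)^q`:
`Σ (n+1)^{2q} ℓₙ² < ∞` implies
`Σₙ (ℓₙ/((n+1)^q(n+2)^q)) Σ_{k<n} (k+1)^q (k+2)^q ℓₖ < ∞`. -/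
theorem polynomial_antitree_trace_class (q : ℕ) (hq : 1 ≤ q)
    (ℓ : ℕ → ℝ) (hℓ : ∀ n, 0 < ℓ n)
    (h : Summable fun n : ℕ => ((n : ℝ) + 1) ^ (2 * q) * ℓ n ^ 2) :
    Summable fun n : ℕ =>
      ℓ n / (((n : ℝ) + 1) ^ q * ((n : ℝ) + 2) ^ q) *
        ∑ k ∈ Finset.range n, ((k : ℝ) + 1) ^ q * ((k : ℝ) + 2) ^ q * ℓ k := by
  have hℓ₀ : ∀ n, 0 ≤ ℓ n := fun n => (hℓ n).le
  have ha : Summable fun n : ℕ => (((n : ℝ) + 1) ^ q * ℓ n) ^ 2 := by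
    simpa only [mul_pow, ← pow_mul, mul_comm q 2] using h
  refine (summable_mul_sum_range_div_sq ha).of_nonneg_of_le (fun n => ?_)
    (div_mul_sum_range_mul_pow_succ_le hq hℓ₀)
  exact mul_nonneg (div_nonneg (hℓ₀ n) (by positivity))
    (sum_nonneg fun k _ => mul_nonneg (by positivity) (hℓ₀ k))
end
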